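/- arXiv:2312.13965 — 6 statements merged into one kernel-verified Lean document; each statement's English description precedes it below -/
import Mathlib

section
/- Let G_1, …, G_q be 3-graphs. For each i ∈ [q], let (H_i, F_i) be a pair to which G_i is reducible (by collapsing some collapsible set of G_i), and if G_i is not reducible to any pair, set H_i = G_i. Let h = max_{i ∈ [q]} v(H_i). Then r(G_1, …, G_q) ≤ r(H_1, …, H_q)^h · q · M, where M is the maximum of 1 and all the numbers r(G_1, …, G_{i-1}, F_i, G_{i+1}, …, G_q) over those i for which G_i is reducible. -/
/-- A 3-uniform hypergraph with vertices drawn from ℕ. -/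
structure ThreeGraph where
  verts : Finset ℕ
  edges : Finset (Finset ℕ)
  edge_card : ∀ e ∈ edges, e.card = 3
  edge_sub : ∀ e ∈ edges, e ⊆ verts

/-- A 3-graph is tripartite if its vertex set can be partitioned into three parts so that
every edge has exactly one vertex in each part. -/
def Tripartite (G : ThreeGraph) : Prop :=
  ∃ V1 V2 V3 : Finset ℕ,
    Disjoint V1 V2 ∧ Disjoint V1 V3 ∧ Disjoint V2 V3 ∧
    V1 ∪ V2 ∪ V3 = G.verts ∧
    ∀ e ∈ G.edges, (e ∩ V1).card = 1 ∧ (e ∩ V2).card = 1 ∧ (e ∩ V3).card = 1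

/-- Membership in the family 𝒰₁: there is a vertex subset intersecting every edge in
exactly one vertex. -/
def InU1 (G : ThreeGraph) : Prop :=
  ∃ W : Finset ℕ, W ⊆ G.verts ∧ ∀ e ∈ G.edges, (e ∩ W).card = 1

/-- `Reducible G H F` : `G` is reducible to the pair `(H, F)` by collapsing a collapsible
set `U` (with `F = G[U]`), where the new vertex of `H` is `v`. -/
def Reducible (G H F : ThreeGraph) : Prop :=
  ∃ (U : Finset ℕ) (v : ℕ),
    U ⊆ G.verts ∧ 2 ≤ U.card ∧ U.card < G.verts.card ∧
    (∀ e ∈ G.edges, (e ∩ U).card ≠ 2) ∧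
    v ∉ G.verts ∧
    H.verts = (G.verts \ U) ∪ {v} ∧
    H.edges = G.edges.filter (fun e => e ∩ U = ∅) ∪
      (G.edges.filter (fun e => (e ∩ U).card = 1)).image (fun e => (e \ U) ∪ {v}) ∧
    F.verts = U ∧
    F.edges = G.edges.filter (fun e => e ⊆ U)

/-- `MemU i G` means `G ∈ 𝒰ᵢ`: `𝒰₀` is the family of tripartite 3-graphs, `𝒰₁` of 3-graphs
with a vertex set meeting every edge exactly once, the families are nested, and for `i ≥ 2`,
`G ∈ 𝒰ᵢ` whenever `G` is reducible to `(H, F)` with `H ∈ 𝒰ᵢ₋₁` and `F ∈ 𝒰ᵢ`. -/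
inductive MemU : ℕ → ThreeGraph → Prop where
  | zero (G : ThreeGraph) : Tripartite G → MemU 0 G
  | one (G : ThreeGraph) : InU1 G → MemU 1 G
  | mono (i : ℕ) (G : ThreeGraph) : MemU i G → MemU (i + 1) G
  | reduce (i : ℕ) (G H F : ThreeGraph) :
      Reducible G H F → MemU (i + 1) H → MemU (i + 2) F → MemU (i + 2) G

/-- `G ∈ 𝒰 = ⋃ᵢ 𝒰ᵢ`. -/
def InU (G : ThreeGraph) : Prop := ∃ i, MemU i G

/-- A monochromatic copy of `G` in color `i` under the coloring `χ` of the triples of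
`Fin N`. -/
def MonoCopy {N q : ℕ} (χ : Finset (Fin N) → Fin q) (i : Fin q) (G : ThreeGraph) : Prop :=
  ∃ f : ℕ → Fin N, Set.InjOn f ↑G.verts ∧ ∀ e ∈ G.edges, χ (e.image f) = i

/-- `N` vertices suffice to find, in any `q`-coloring, a monochromatic copy of `Gs i` in
color `i` for some `i`. -/
def RamseyProp {q : ℕ} (Gs : Fin q → ThreeGraph) (N : ℕ) : Prop :=
  ∀ χ : Finset (Fin N) → Fin q, ∃ i : Fin q, MonoCopy χ i (Gs i)

/-- The Ramsey number `r(G₁, …, G_q)`. -/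
noncomputable def ramseyNumber {q : ℕ} (Gs : Fin q → ThreeGraph) : ℕ :=
  sInf {N | RamseyProp Gs N}

/-- The `q`-color Ramsey number `r(G; q)`. -/
noncomputable def rq (G : ThreeGraph) (q : ℕ) : ℕ :=
  ramseyNumber (fun _ : Fin q => G)

/-!
Let `n = r(H₁, …, H_q)` and `N = n ^ h * q * M`. Every `n`-subset of `Fin N` contains a copy of
some `Hᵢ` in colour `i`, and a copy of `Hᵢ` lies in only `C(N - v, n - v)` of them
(`v = v(Hᵢ)`), so double counting gives a colour `i` with at least `N ^ (v - 1) * M` copies of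
`Hᵢ` in colour `i`. If `Gᵢ` is not reducible, `Hᵢ = Gᵢ` and we are done. Otherwise, by
pigeonhole, `M` of these copies agree off the collapsed vertex `v`. The Ramsey property of
`(G₁, …, Fᵢ, …, G_q)` on their `M` images of `v` yields a copy of some `Gⱼ`, `j ≠ i`, in
colour `j`, or a copy of `Fᵢ` in colour `i`, which, substituted for `v`, completes a copy of
`Gᵢ`. That the Ramsey numbers exist at all is Ramsey's theorem for hypergraphs, proved with
end-homogeneous sets.
-/

open Finset

lemma Nat.choose_mul_pow_le_choose_mul_pow {n N : ℕ} (h : n ≤ N) (v : ℕ) :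
    n.choose v * N ^ v ≤ N.choose v * n ^ v := by
  have hdesc : n.descFactorial v * N ^ v ≤ N.descFactorial v * n ^ v := by
    induction v with
    | zero => simp
    | succ v ih =>
      have hstep : (n - v) * N ≤ (N - v) * n := by
        rw [Nat.sub_mul, Nat.sub_mul, mul_comm N n]
        exact Nat.sub_le_sub_left (Nat.mul_le_mul_left v h) _
      calc n.descFactorial (v + 1) * N ^ (v + 1)
          = ((n - v) * N) * (n.descFactorial v * N ^ v) := by
            rw [Nat.descFactorial_succ, pow_succ]; ring
        _ ≤ ((N - v) * n) * (N.descFactorial v * n ^ v) := Nat.mul_le_mul hstep ih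
        _ = N.descFactorial (v + 1) * n ^ (v + 1) := by
            rw [Nat.descFactorial_succ, pow_succ]; ring
  rw [Nat.descFactorial_eq_factorial_mul_choose, Nat.descFactorial_eq_factorial_mul_choose,
    mul_assoc, mul_assoc] at hdesc
  exact Nat.le_of_mul_le_mul_left hdesc (Nat.factorial_pos v)

lemma Nat.pow_pred_mul_le_of_pow_le {a M c v : ℕ} (ha : 0 < a) (hv : 1 ≤ v)
    (h : (a * M) ^ v ≤ c * a) : (a * M) ^ (v - 1) * M ≤ c := by
  obtain ⟨w, rfl⟩ : ∃ w, v = w + 1 := ⟨v - 1, by omega⟩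
  refine le_of_mul_le_mul_right ?_ ha
  calc (a * M) ^ (w + 1 - 1) * M * a = (a * M) ^ (w + 1) := by
        rw [Nat.add_sub_cancel, pow_succ]; ring
    _ ≤ c * a := h

/-- `C(N, n) / C(N - v, n - v) = C(N, v) / C(n, v) ≥ (N / n) ^ v`. -/
lemma Nat.pow_le_mul_pow_of_choose_le {v n N a : ℕ} (hvn : v ≤ n) (hnN : n ≤ N)
    (h : N.choose n ≤ a * (N - v).choose (n - v)) : N ^ v ≤ a * n ^ v := by
  have hv : N.choose v ≤ a * n.choose v := by
    refine le_of_mul_le_mul_right ?_ (Nat.choose_pos (by omega : n - v ≤ N - v))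
    calc N.choose v * (N - v).choose (n - v) = N.choose n * n.choose v :=
          (Nat.choose_mul hvn).symm
      _ ≤ a * (N - v).choose (n - v) * n.choose v := Nat.mul_le_mul_right _ h
      _ = a * n.choose v * (N - v).choose (n - v) := by ring
  refine le_of_mul_le_mul_right ?_ (Nat.choose_pos hvn)
  calc N ^ v * n.choose v = n.choose v * N ^ v := mul_comm _ _
    _ ≤ N.choose v * n ^ v := Nat.choose_mul_pow_le_choose_mul_pow hnN v
    _ ≤ a * n.choose v * n ^ v := Nat.mul_le_mul_right _ hv
    _ = a * n ^ v * n.choose v := by ring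

section HypergraphRamsey

variable {α κ : Type*} [LinearOrder α]

def EndHomogeneous (χ : Finset α → κ) (k : ℕ) (A S : Finset α) : Prop :=
  (∀ a ∈ A, ∀ z ∈ S, a < z) ∧
    ∀ T ⊆ A, #T = k → ∀ y ∈ A, (∀ x ∈ T, x < y) → ∀ z ∈ S, χ (insert z T) = χ (insert y T)

lemma endHomogeneous_empty (χ : Finset α → κ) (k : ℕ) (S : Finset α) :
    EndHomogeneous χ k ∅ S := by
  simp [EndHomogeneous]

/-- The new point `a` is the least element of a pigeonhole class of the colourings
`T ↦ χ (insert z T)` of the `k`-subsets of `A`. -/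
lemma EndHomogeneous.exists_insert [Fintype κ] {χ : Finset α → κ} {k t : ℕ} {A S : Finset α}
    (h : EndHomogeneous χ k A S) (hS : Fintype.card κ ^ (#A).choose k * (t + 1) ≤ #S) :
    ∃ a ∈ S, ∃ S' ⊆ S, t ≤ #S' ∧ EndHomogeneous χ k (insert a A) S' := by
  classical
  have : Nonempty κ := ⟨χ ∅⟩
  let P := A.powersetCard k
  obtain ⟨c, -, hc⟩ := exists_le_card_fiber_of_mul_le_card_of_maps_to
    (f := fun z (T : P) => χ (insert z T)) (fun _ _ => mem_univ _) univ_nonempty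
    (by simpa [P, Fintype.card_coe] using hS)
  set F := S.filter fun z => (fun T : P => χ (insert z T)) = c
  have hF : F.Nonempty := card_pos.mp (by omega)
  set a := F.min' hF
  have haF : a ∈ F := F.min'_mem hF
  have hFS : F ⊆ S := filter_subset _ _
  refine ⟨a, hFS haF, F.erase a, (erase_subset _ _).trans hFS, ?_, ?_, ?_⟩
  · rw [card_erase_of_mem haF]; omega
  · intro b hb z hz
    have hzF := mem_of_mem_erase hz
    rcases mem_insert.mp hb with rfl | hbA
    · exact lt_of_le_of_ne (F.min'_le z hzF) (ne_of_mem_erase hz).symm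
    · exact h.1 b hbA z (hFS hzF)
  · intro T hT hTk y hy hTy z hz
    have hzF := mem_of_mem_erase hz
    rcases mem_insert.mp hy with rfl | hyA
    · have hTA : T ⊆ A := fun x hx =>
        (mem_insert.mp (hT hx)).resolve_left (hTy x hx).ne
      have hTP : T ∈ P := mem_powersetCard.mpr ⟨hTA, hTk⟩
      exact congrFun ((mem_filter.mp hzF).2.trans (mem_filter.mp haF).2.symm) ⟨T, hTP⟩
    · have hTA : T ⊆ A := fun x hx => (mem_insert.mp (hT hx)).resolve_left fun hxa =>
        lt_asymm (h.1 y hyA a (hFS haF)) (hxa ▸ hTy x hx)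
      exact h.2 T hTA hTk y hyA hTy z (hFS hzF)

lemma exists_endHomogeneous (κ : Type*) [Fintype κ] (k m t : ℕ) :
    ∃ N, ∀ {α : Type*} [LinearOrder α] (V : Finset α) (χ : Finset α → κ), N ≤ #V →
      ∃ A ⊆ V, ∃ S ⊆ V, #A = m ∧ t ≤ #S ∧ EndHomogeneous χ k A S := by
  induction m generalizing t with
  | zero => exact ⟨t, fun V χ hV => ⟨∅, empty_subset _, V, subset_rfl, rfl, hV,
      endHomogeneous_empty χ k V⟩⟩
  | succ m ih =>
    obtain ⟨N, hN⟩ := ih (Fintype.card κ ^ m.choose k * (t + 1))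
    refine ⟨N, fun V χ hV => ?_⟩
    obtain ⟨A, hAV, S, hSV, hA, hS, h⟩ := hN V χ hV
    obtain ⟨a, haS, S', hS'S, hS', h'⟩ := h.exists_insert (hA ▸ hS)
    have haA : a ∉ A := fun haA => lt_irrefl a (h.1 a haA a haS)
    exact ⟨insert a A, insert_subset (hSV haS) hAV, S', hS'S.trans hSV,
      by rw [card_insert_of_notMem haA, hA], hS', h'⟩

theorem exists_monochromatic_subset (κ : Type*) [Fintype κ] (k s : ℕ) :
    ∃ N, ∀ {α : Type*} [LinearOrder α] (V : Finset α) (χ : Finset α → κ), N ≤ #V →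
      ∃ i, ∃ S ⊆ V, s ≤ #S ∧ ∀ t ⊆ S, #t = k → χ t = i := by
  induction k with
  | zero => exact ⟨s, fun V χ hV => ⟨χ ∅, V, subset_rfl, hV, fun t _ ht => by
      rw [card_eq_zero.mp ht]⟩⟩
  | succ k ih =>
    obtain ⟨m, hm⟩ := ih
    obtain ⟨N, hN⟩ := exists_endHomogeneous κ k m 1
    refine ⟨N, fun V χ hV => ?_⟩
    obtain ⟨A, hAV, S, -, hA, hS, h⟩ := hN V χ hV
    obtain ⟨z, hz⟩ := card_pos.mp hS
    -- on `A`, `χ t` is determined by `t` minus its largest element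
    obtain ⟨i, S', hS'A, hS', hi⟩ := hm A (fun T => χ (insert z T)) hA.ge
    refine ⟨i, S', hS'A.trans hAV, hS', fun t ht htk => ?_⟩
    have hne : t.Nonempty := card_pos.mp (by omega)
    set y := t.max' hne
    have hy : y ∈ t := t.max'_mem hne
    have hT : t.erase y ⊆ S' := (erase_subset _ _).trans ht
    have hTk : #(t.erase y) = k := by rw [card_erase_of_mem hy, htk]; rfl
    calc χ t = χ (insert y (t.erase y)) := by rw [insert_erase hy]
      _ = χ (insert z (t.erase y)) := (h.2 _ (hT.trans hS'A) hTk y (hS'A (ht hy))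
          (fun x hx => t.lt_max'_of_mem_erase_max' hne hx) z hz).symm
      _ = i := hi _ hT hTk

end HypergraphRamsey

section MonoCopies

variable {α κ : Type*} [DecidableEq α] {χ : Finset α → κ} {i : κ}

def IsMonoCopy (χ : Finset α → κ) (i : κ) (G : ThreeGraph) (f : ℕ → α) : Prop :=
  Set.InjOn f G.verts ∧ ∀ e ∈ G.edges, χ (e.image f) = i

lemma IsMonoCopy.congr {G : ThreeGraph} {f g : ℕ → α} (hf : IsMonoCopy χ i G f)
    (hfg : Set.EqOn f g G.verts) : IsMonoCopy χ i G g :=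
  ⟨hf.1.congr hfg, fun e he => by
    rw [← image_congr (hfg.mono (coe_subset.mpr (G.edge_sub e he)))]
    exact hf.2 e he⟩

lemma IsMonoCopy.comp {β : Type*} [DecidableEq β] {χ : Finset β → κ} {φ : α → β}
    (hφ : Function.Injective φ) {G : ThreeGraph} {f : ℕ → α}
    (hf : IsMonoCopy (fun T => χ (T.image φ)) i G f) : IsMonoCopy χ i G (φ ∘ f) :=
  ⟨hφ.comp_injOn hf.1, fun e he => by rw [← image_image]; exact hf.2 e he⟩

lemma isMonoCopy_of_verts_eq_empty {G : ThreeGraph} (hG : G.verts = ∅) (f : ℕ → α) :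
    IsMonoCopy χ i G f :=
  ⟨by simp [hG], fun e he => by
    have hsub : e ⊆ ∅ := hG ▸ G.edge_sub e he
    have := G.edge_card e he
    rw [subset_empty.mp hsub] at this
    simp at this⟩

def IsCollapse (G H F : ThreeGraph) (U : Finset ℕ) (v : ℕ) : Prop :=
  U ⊆ G.verts ∧ 2 ≤ #U ∧ #U < #G.verts ∧ (∀ e ∈ G.edges, #(e ∩ U) ≠ 2) ∧ v ∉ G.verts ∧
    H.verts = (G.verts \ U) ∪ {v} ∧
    H.edges = {e ∈ G.edges | e ∩ U = ∅} ∪ {e ∈ G.edges | #(e ∩ U) = 1}.image (· \ U ∪ {v}) ∧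
    F.verts = U ∧ F.edges = {e ∈ G.edges | e ⊆ U}

lemma IsCollapse.mem_verts {G H F : ThreeGraph} {U : Finset ℕ} {v : ℕ}
    (hc : IsCollapse G H F U v) : v ∈ H.verts := by
  simp [hc.2.2.2.2.2.1]

lemma reducible_iff {G H F : ThreeGraph} : Reducible G H F ↔ ∃ U v, IsCollapse G H F U v :=
  Iff.rfl

/-- A copy of `F` whose vertices all extend a common copy of `H - v` to a copy of `H`
assembles, together with that copy, into a copy of `G`. -/
lemma IsCollapse.isMonoCopy_piecewise {G H F : ThreeGraph} {U : Finset ℕ} {v : ℕ}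
    (hc : IsCollapse G H F U v) {b f : ℕ → α} {W : Finset α}
    (hb : ∀ w ∈ W, IsMonoCopy χ i H (Function.update b v w)) (hf : IsMonoCopy χ i F f)
    (hfW : ∀ x ∈ U, f x ∈ W) : IsMonoCopy χ i G (U.piecewise f b) := by
  classical
  have hvH := hc.mem_verts
  obtain ⟨hUG, hU2, -, hcoll, hvG, hHv, hHe, hFv, hFe⟩ := hc
  obtain ⟨u₀, hu₀⟩ : U.Nonempty := card_pos.mp (by omega)
  have hout : ∀ x ∈ G.verts, x ∉ U → x ∈ H.verts ∧ x ≠ v := fun x hx hxU =>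
    ⟨by simp [hHv, hx, hxU], by rintro rfl; exact hvG hx⟩
  have hupd : ∀ w, Set.EqOn (Function.update b v w) b ↑(G.verts \ U) := fun w x hx =>
    Function.update_of_ne (hout x (mem_sdiff.mp hx).1 (mem_sdiff.mp hx).2).2 _ _
  have hbW : ∀ x ∈ G.verts, x ∉ U → b x ∉ W := fun x hx hxU hxW =>
    (hout x hx hxU).2 <| (hb _ hxW).1 (hout x hx hxU).1 hvH <| by
      simp [Function.update_of_ne (hout x hx hxU).2]
  have hbinj : Set.InjOn b ↑(G.verts \ U) :=
    ((hb _ (hfW u₀ hu₀)).1.mono fun x hx =>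
      (hout x (mem_sdiff.mp hx).1 (mem_sdiff.mp hx).2).1).congr (hupd _)
  have hout_image : ∀ e ∈ G.edges, ∀ w,
      (e \ U).image (U.piecewise f b) = (e \ U).image (Function.update b v w) := fun e he w =>
    image_congr fun x hx => by
      have hx := mem_sdiff.mp hx
      rw [piecewise_eq_of_notMem _ _ _ hx.2]
      exact (hupd w (mem_sdiff.mpr ⟨G.edge_sub e he hx.1, hx.2⟩)).symm
  refine ⟨?_, fun e he => ?_⟩
  · rw [← union_sdiff_of_subset hUG, coe_union, Set.injOn_union (disjoint_coe.mpr disjoint_sdiff)]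
    refine ⟨(hFv ▸ hf.1).congr fun x hx => (piecewise_eq_of_mem _ _ _ hx).symm,
      hbinj.congr fun x hx => (piecewise_eq_of_notMem _ _ _ (mem_sdiff.mp hx).2).symm,
      fun x hx y hy hxy => ?_⟩
    rw [piecewise_eq_of_mem _ _ _ hx, piecewise_eq_of_notMem _ _ _ (mem_sdiff.mp hy).2] at hxy
    exact hbW y (mem_sdiff.mp hy).1 (mem_sdiff.mp hy).2 (hxy ▸ hfW x hx)
  have hle : #(e ∩ U) ≤ 3 := G.edge_card e he ▸ card_le_card inter_subset_left
  rcases (by have := hcoll e he; omega : #(e ∩ U) = 0 ∨ #(e ∩ U) = 1 ∨ #(e ∩ U) = 3)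
    with h0 | h1 | h3
  · have heU : e \ U = e := sdiff_eq_self_iff_disjoint.mpr
      (disjoint_iff_inter_eq_empty.mpr (card_eq_zero.mp h0))
    have heH : e ∈ H.edges := by simp [hHe, he, card_eq_zero.mp h0]
    rw [← heU, hout_image e he (f u₀), heU]
    exact (hb _ (hfW u₀ hu₀)).2 e heH
  · obtain ⟨u, hu⟩ := card_eq_one.mp h1
    have huU : u ∈ U := (mem_inter.mp (hu ▸ mem_singleton_self u)).2
    have heH : e \ U ∪ {v} ∈ H.edges := by
      rw [hHe]
      exact mem_union_right _ (mem_image_of_mem _ (mem_filter.mpr ⟨he, h1⟩))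
    have := (hb _ (hfW u huU)).2 _ heH
    rwa [image_union, image_singleton, Function.update_self, ← piecewise_eq_of_mem U f b huU,
      ← image_singleton, ← hout_image e he, ← image_union, ← hu, sdiff_union_inter] at this
  · have heU : e ⊆ U := inter_eq_left.mp
      (eq_of_subset_of_card_le inter_subset_left (by rw [G.edge_card e he, h3]))
    rw [image_congr (g := f) fun x hx => piecewise_eq_of_mem _ _ _ (heU hx)]
    exact hf.2 e (by simp [hFe, he, heU])

lemma RamseyProp.exists_isMonoCopy_subset {q m N : ℕ} {Gs : Fin q → ThreeGraph}
    (hR : RamseyProp Gs m) (χ : Finset (Fin N) → Fin q) {S : Finset (Fin N)} (hS : m ≤ #S) :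
    ∃ i f, IsMonoCopy χ i (Gs i) f ∧ ∀ x, f x ∈ S := by
  obtain ⟨T, hTS, hT⟩ := exists_subset_card_eq hS
  obtain ⟨i, f, hf⟩ := hR fun U => χ (U.image (T.orderEmbOfFin hT))
  exact ⟨i, _, IsMonoCopy.comp (T.orderEmbOfFin hT).injective hf,
    fun x => hTS (T.orderEmbOfFin_mem hT _)⟩

end MonoCopies

section Counting

variable {α κ : Type*} [DecidableEq α] [Fintype α] {χ : Finset α → κ} {i : κ}

open Classical in
/-- Copies are recorded by their restriction to `G.verts`, so that they form a finite set. -/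
noncomputable def monoCopies (χ : Finset α → κ) (i : κ) (G : ThreeGraph) :
    Finset (G.verts → α) :=
  {g | ∃ f, IsMonoCopy χ i G f ∧ G.verts.restrict f = g}

lemma mem_monoCopies {G : ThreeGraph} {g : G.verts → α} :
    g ∈ monoCopies χ i G ↔ ∃ f, IsMonoCopy χ i G f ∧ G.verts.restrict f = g := by
  simp [monoCopies]

lemma injective_of_mem_monoCopies {G : ThreeGraph} {g : G.verts → α}
    (hg : g ∈ monoCopies χ i G) : Function.Injective g := by
  obtain ⟨f, hf, rfl⟩ := mem_monoCopies.mp hg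
  exact hf.1.injective

lemma exists_update_isMonoCopy [Nonempty α] {G : ThreeGraph} {v : ℕ} (hv : v ∈ G.verts)
    {M : ℕ} (hM : Fintype.card α ^ (#G.verts - 1) * M ≤ #(monoCopies χ i G)) :
    ∃ (b : ℕ → α) (W : Finset α), M ≤ #W ∧ ∀ w ∈ W, IsMonoCopy χ i G (Function.update b v w) := by
  classical
  obtain ⟨c, -, hc⟩ := exists_le_card_fiber_of_mul_le_card_of_maps_to
    (f := restrict₂ (π := fun _ => α) (erase_subset v G.verts)) (fun _ _ => mem_univ _)
    univ_nonempty (by simpa [Fintype.card_coe, card_erase_of_mem hv] using hM)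
  set C := {g ∈ monoCopies χ i G | restrict₂ (π := fun _ => α) (erase_subset v G.verts) g = c}
  let b : ℕ → α := fun x => if h : x ∈ G.verts.erase v then c ⟨x, h⟩ else Classical.arbitrary α
  have hC : ∀ g ∈ C, ∀ x (hx : x ∈ G.verts), x ≠ v → g ⟨x, hx⟩ = b x := by
    intro g hg x hx hxv
    have hx' : x ∈ G.verts.erase v := mem_erase.mpr ⟨hxv, hx⟩
    simp only [b, dif_pos hx', ← (mem_filter.mp hg).2]
    rfl
  refine ⟨b, C.image fun g => g ⟨v, hv⟩, ?_, ?_⟩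
  · rw [card_image_of_injOn]
    · exact hc
    intro g hg g' hg' hgg'
    funext ⟨x, hx⟩
    by_cases hxv : x = v
    · subst hxv; exact hgg'
    · rw [hC g hg x hx hxv, hC g' hg' x hx hxv]
  · simp only [mem_image]
    rintro _ ⟨g, hg, rfl⟩
    obtain ⟨f, hf, rfl⟩ := mem_monoCopies.mp (mem_filter.mp hg).1
    refine hf.congr fun x hx => ?_
    by_cases hxv : x = v
    · subst hxv; simp [restrict]
    · rw [Function.update_of_ne hxv, ← hC _ hg x hx hxv]
      rfl

lemma card_biUnion_supersets_le {α β : Type*} [DecidableEq α] [Fintype α] [Fintype β]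
    {C : Finset (β → α)} (hC : ∀ g ∈ C, Function.Injective g) {n : ℕ}
    (hn : Fintype.card β ≤ n) :
    #(C.biUnion fun g => {S ∈ powersetCard n univ | univ.image g ⊆ S}) ≤
      #C * (Fintype.card α - Fintype.card β).choose (n - Fintype.card β) := by
  refine (card_biUnion_le_card_mul _ _ _ fun g hg => ?_)
  have hg : #(univ.image g) = Fintype.card β := by
    rw [card_image_of_injective _ (hC g hg), card_univ]
  rw [card_filter_powersetCard_subset _ _ _ (subset_univ _) (hg ▸ hn), hg, card_univ]

lemma RamseyProp.exists_pow_le_card_monoCopies {q n N : ℕ} {Hs : Fin q → ThreeGraph}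
    (hR : RamseyProp Hs n) (hnN : n ≤ N) (χ : Finset (Fin N) → Fin q) :
    ∃ i, N ^ #(Hs i).verts ≤ q * #(monoCopies χ i (Hs i)) * n ^ #(Hs i).verts := by
  let A : Fin q → Finset (Finset (Fin N)) := fun i =>
    (monoCopies χ i (Hs i)).biUnion fun g => {S ∈ powersetCard n univ | univ.image g ⊆ S}
  have hcover : N.choose n ≤ ∑ i, #(A i) := by
    calc N.choose n = #(powersetCard n (univ : Finset (Fin N))) := by simp
      _ ≤ #(univ.biUnion A) := card_le_card fun S hS => ?_
      _ ≤ ∑ i, #(A i) := card_biUnion_le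
    obtain ⟨i, f, hf, hfS⟩ := hR.exists_isMonoCopy_subset χ (mem_powersetCard.mp hS).2.ge
    simp only [A, mem_biUnion, mem_filter]
    exact ⟨i, mem_univ _, _, mem_monoCopies.mpr ⟨f, hf, rfl⟩, hS,
      fun y hy => by obtain ⟨x, -, rfl⟩ := mem_image.mp hy; exact hfS x⟩
  obtain ⟨i, -, hi⟩ := exists_le_of_sum_le (univ_nonempty_iff.mpr ⟨χ ∅⟩)
    (f := fun _ => N.choose n) (g := fun i => q * #(A i))
    (by simpa [← mul_sum] using Nat.mul_le_mul_left q hcover)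
  refine ⟨i, ?_⟩
  have hvn : #(Hs i).verts ≤ n := by
    obtain ⟨S, hS⟩ := card_pos.mp (Nat.pos_of_mul_pos_left
      ((Nat.choose_pos hnN).trans_le hi))
    obtain ⟨g, hg, hS⟩ := mem_biUnion.mp hS
    obtain ⟨hSn, hgS⟩ := mem_filter.mp hS
    calc #(Hs i).verts = #(univ.image g) := by
          rw [card_image_of_injective _ (injective_of_mem_monoCopies hg), card_univ,
            Fintype.card_coe]
      _ ≤ #S := card_le_card hgS
      _ = n := (mem_powersetCard.mp hSn).2
  refine Nat.pow_le_mul_pow_of_choose_le hvn hnN ?_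
  calc N.choose n ≤ q * #(A i) := hi
    _ ≤ q * (#(monoCopies χ i (Hs i)) * (N - #(Hs i).verts).choose (n - #(Hs i).verts)) := by
      refine Nat.mul_le_mul_left _ ?_
      simpa only [Fintype.card_coe, Fintype.card_fin] using
        card_biUnion_supersets_le (C := monoCopies χ i (Hs i))
          (fun g hg => injective_of_mem_monoCopies hg) (by simpa using hvn)
    _ = _ := by ring

end Counting

section RamseyNumber

variable {q : ℕ}

lemma exists_ramseyProp (Gs : Fin q → ThreeGraph) : ∃ N, RamseyProp Gs N := by
  obtain ⟨N, hN⟩ := exists_monochromatic_subset (Fin q) 3 (univ.sup fun i => #(Gs i).verts)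
  refine ⟨N + 1, fun χ => ?_⟩
  obtain ⟨i, S, -, hS, hmono⟩ := hN (univ : Finset (Fin (N + 1))) χ (by simp)
  have hcard : #(Gs i).verts ≤ #S :=
    (le_sup (f := fun i => #(Gs i).verts) (mem_univ i)).trans hS
  obtain ⟨f, hfS, hf⟩ := (Gs i).verts.finite_toSet.exists_injOn_of_encard_le
    (t := (S : Set (Fin (N + 1)))) (by simpa only [Set.encard_coe_eq_coe_finsetCard, Nat.cast_le])
  refine ⟨i, f, hf, fun e he => hmono _ (fun y hy => ?_) ?_⟩
  · obtain ⟨x, hx, rfl⟩ := mem_image.mp hy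
    exact hfS ((Gs i).edge_sub e he hx)
  · rw [card_image_of_injOn (hf.mono (coe_subset.mpr ((Gs i).edge_sub e he))),
      (Gs i).edge_card e he]

lemma ramseyProp_ramseyNumber (Gs : Fin q → ThreeGraph) : RamseyProp Gs (ramseyNumber Gs) :=
  Nat.sInf_mem (exists_ramseyProp Gs)

lemma ramseyNumber_pos (hq : 0 < q) (Gs : Fin q → ThreeGraph) : 0 < ramseyNumber Gs := by
  refine Nat.pos_of_ne_zero fun h0 => ?_
  obtain ⟨-, f, -⟩ := (h0 ▸ ramseyProp_ramseyNumber Gs) fun _ => ⟨0, hq⟩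
  exact (f 0).elim0

lemma ramseyNumber_le_one {Gs : Fin q → ThreeGraph} {i : Fin q} (hG : (Gs i).verts = ∅) :
    ramseyNumber Gs ≤ 1 :=
  Nat.sInf_le fun _ => ⟨i, fun _ => 0, isMonoCopy_of_verts_eq_empty hG _⟩

lemma exists_monoCopy_of_reducible {a M : ℕ} {Gs : Fin q → ThreeGraph} {H F : ThreeGraph}
    {i : Fin q} (hred : Reducible (Gs i) H F) (hM : ramseyNumber (Function.update Gs i F) ≤ M)
    (ha : 0 < a) (hM0 : 0 < M) (χ : Finset (Fin (a * M)) → Fin q)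
    (hcopies : (a * M) ^ #H.verts ≤ #(monoCopies χ i H) * a) : ∃ j, MonoCopy χ j (Gs j) := by
  obtain ⟨U, v, hc⟩ := reducible_iff.mp hred
  have : Nonempty (Fin (a * M)) := ⟨⟨0, Nat.mul_pos ha hM0⟩⟩
  obtain ⟨b, W, hW, hb⟩ := exists_update_isMonoCopy (χ := χ) hc.mem_verts
    (by rw [Fintype.card_fin]; exact Nat.pow_pred_mul_le_of_pow_le ha (card_pos.mpr
      ⟨v, hc.mem_verts⟩) hcopies)
  obtain ⟨j, f, hf, hfW⟩ :=
    (ramseyProp_ramseyNumber _).exists_isMonoCopy_subset χ (hM.trans hW)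
  by_cases hj : j = i
  · subst hj
    rw [Function.update_self] at hf
    exact ⟨j, _, hc.isMonoCopy_piecewise hb hf fun x _ => hfW x⟩
  · rw [Function.update_of_ne hj] at hf
    exact ⟨j, f, hf⟩

end RamseyNumber

/-- Let `G₁, …, G_q` be 3-graphs; for each `i`, either `Gᵢ` is reducible to
the chosen pair `(Hᵢ, Fᵢ)`, or `Gᵢ` is not reducible to any pair and `Hᵢ = Gᵢ`. Let
`h = maxᵢ v(Hᵢ)` and let `M` be any number which is at least `1` and at least
`r(G₁, …, G_{i-1}, Fᵢ, G_{i+1}, …, G_q)` for every `i` for which `Gᵢ` is reducible (in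
particular, the maximum of these quantities). Then
`r(G₁, …, G_q) ≤ r(H₁, …, H_q) ^ h · q · M`. -/
theorem stmt6 (q : ℕ) (Gs Hs Fs : Fin q → ThreeGraph)
    (hpair : ∀ i, Reducible (Gs i) (Hs i) (Fs i) ∨
      (Hs i = Gs i ∧ ∀ H F : ThreeGraph, ¬ Reducible (Gs i) H F))
    (h : ℕ) (hh : h = Finset.univ.sup fun i => (Hs i).verts.card)
    (M : ℕ) (hM1 : 1 ≤ M)
    (hM : ∀ i, Reducible (Gs i) (Hs i) (Fs i) →
      ramseyNumber (Function.update Gs i (Fs i)) ≤ M) :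
    ramseyNumber Gs ≤ ramseyNumber Hs ^ h * q * M := by
  rcases Nat.eq_zero_or_pos q with rfl | hq
  · exact Nat.sInf_le fun χ => (χ ∅).elim0
  set n := ramseyNumber Hs
  have hn : 0 < n := ramseyNumber_pos hq Hs
  have hvh : ∀ i, #(Hs i).verts ≤ h := fun i =>
    hh ▸ le_sup (f := fun i => #(Hs i).verts) (mem_univ i)
  have hnN : n ≤ n ^ h * q * M := by
    rcases Nat.eq_zero_or_pos h with rfl | hpos
    · calc n ≤ 1 := ramseyNumber_le_one (i := ⟨0, hq⟩) (card_eq_zero.mp (Nat.le_zero.mp (hvh _)))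
        _ ≤ n ^ 0 * q * M := by simpa using Nat.mul_le_mul hq hM1
    · calc n ≤ n ^ h := Nat.le_self_pow hpos.ne' n
        _ ≤ n ^ h * q * M := by
          rw [mul_assoc]; exact Nat.le_mul_of_pos_right _ (Nat.mul_pos hq hM1)
  refine Nat.sInf_le fun χ => ?_
  obtain ⟨i, hi⟩ := (ramseyProp_ramseyNumber Hs).exists_pow_le_card_monoCopies hnN χ
  rcases hpair i with hred | ⟨hHG, -⟩
  · refine exists_monoCopy_of_reducible hred (hM i hred) (by positivity) hM1 χ ?_
    calc (n ^ h * q * M) ^ #(Hs i).verts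
        ≤ q * #(monoCopies χ i (Hs i)) * n ^ #(Hs i).verts := hi
      _ ≤ q * #(monoCopies χ i (Hs i)) * n ^ h := by gcongr; exact hvh i
      _ = #(monoCopies χ i (Hs i)) * (n ^ h * q) := by ring
  · obtain ⟨g, hg⟩ := card_pos.mp (Nat.pos_of_mul_pos_left (Nat.pos_of_mul_pos_right
      ((pow_pos (hn.trans_le hnN) _).trans_le hi)))
    obtain ⟨f, hf, -⟩ := mem_monoCopies.mp hg
    exact ⟨i, f, hHG ▸ hf⟩
end

section
/- If a 3-graph G can be decomposed into (H; F_1, …, F_t) where H, F_1, …, F_t all belong to U, then G ∈ U. -/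
/-- `G` can be decomposed into `(H; F 0, …, F (t-1))`: there is a partition of `V(G)` into
parts `V 0, …, V (t-1)` (with `t ≥ 2` and the first part of size at least 2) such that no
edge meets a part in exactly two vertices, `F i = G[V i]`, and `H` is the 3-graph on
`{0, …, t-1}` whose edges are the index triples of parts met by some edge of `G` in one
vertex each. -/
def Decomposable (G H : ThreeGraph) (t : ℕ) (F : ℕ → ThreeGraph) : Prop :=
  2 ≤ t ∧ ∃ V : ℕ → Finset ℕ,
    (∀ i j, i < t → j < t → i ≠ j → Disjoint (V i) (V j)) ∧
    (Finset.range t).biUnion V = G.verts ∧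
    2 ≤ (V 0).card ∧
    (∀ e ∈ G.edges, ∀ i, i < t → (e ∩ V i).card ≠ 2) ∧
    (∀ i, i < t → (F i).verts = V i ∧ (F i).edges = G.edges.filter (fun e => e ⊆ V i)) ∧
    H.verts = Finset.range t ∧
    (∀ s : Finset ℕ, s ∈ H.edges ↔
      s.card = 3 ∧ s ⊆ Finset.range t ∧ ∃ e ∈ G.edges, ∀ i ∈ s, (e ∩ V i).card = 1)

open Finset

-- ## Auxiliary

lemma img_inter (f : ℕ→ℕ) (s e U : Finset ℕ) (hf : Set.InjOn f s) (he : e ⊆ s) (hU : U ⊆ s) : (e ∩ U).image f = (e.image f) ∩ (U.image f) := by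
  ext y; simp only [mem_image, mem_inter]
  constructor
  · rintro ⟨x, ⟨hx1, hx2⟩, rfl⟩; exact ⟨⟨x, hx1, rfl⟩, ⟨x, hx2, rfl⟩⟩
  · rintro ⟨⟨x, hx, rfl⟩, ⟨z, hz, hzx⟩⟩
    exact ⟨x, ⟨hx, by rwa [hf (hU hz) (he hx) hzx] at hz⟩, rfl⟩

lemma img_sdiff (f : ℕ→ℕ) (s e U : Finset ℕ) (hf : Set.InjOn f s) (he : e ⊆ s) (hU : U ⊆ s) : (e \ U).image f = (e.image f) \ (U.image f) := by
  ext y; simp only [mem_image, mem_sdiff]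
  constructor
  · rintro ⟨x, ⟨hxe, hxU⟩, rfl⟩
    exact ⟨⟨x, hxe, rfl⟩, by rintro ⟨z, hz, hzx⟩; exact hxU (by rwa [hf (hU hz) (he hxe) hzx] at hz)⟩
  · rintro ⟨⟨x, hx, rfl⟩, hy⟩
    exact ⟨x, ⟨hx, fun hxU => hy ⟨x, hxU, rfl⟩⟩, rfl⟩

lemma tg_ext {A B : ThreeGraph} (h1 : A.verts = B.verts) (h2 : A.edges = B.edges) : A = B := by
  cases A; cases B; simp_all

def supp (A : ThreeGraph) : Finset ℕ := A.edges.biUnion id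

lemma edge_subset_supp {A : ThreeGraph} {e : Finset ℕ} (he : e ∈ A.edges) : e ⊆ supp A :=
  fun x hx => Finset.mem_biUnion.mpr ⟨e, he, hx⟩

lemma supp_subset_verts (A : ThreeGraph) : supp A ⊆ A.verts := by
  intro x hx
  rcases Finset.mem_biUnion.mp hx with ⟨e, he, hxe⟩
  exact A.edge_sub e he hxe

lemma memU_le {A : ThreeGraph} {j k : ℕ} (h : j ≤ k) (hA : MemU j A) : MemU k A := by
  induction k with
  | zero => rwa [Nat.le_zero.mp h] at hA
  | succ k ih =>
    rcases Nat.lt_or_ge j (k+1) with h'|h'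
    · exact MemU.mono k A (ih (Nat.lt_succ_iff.mp h'))
    · rwa [Nat.le_antisymm h h'] at hA

def Equivv (A B : ThreeGraph) : Prop :=
  ∃ f : ℕ → ℕ, Set.InjOn f ↑(supp A) ∧ B.edges = A.edges.image (fun e => e.image f)

def inducedG (G : ThreeGraph) (W : Finset ℕ) : ThreeGraph where
  verts := W
  edges := G.edges.filter (fun e => e ⊆ W)
  edge_card := fun e he => G.edge_card e (Finset.mem_filter.mp he).1
  edge_sub := fun e he => (Finset.mem_filter.mp he).2

def collapseG (G : ThreeGraph) (U : Finset ℕ) (v : ℕ) (hv : v ∉ G.verts) : ThreeGraph where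
  verts := (G.verts \ U) ∪ {v}
  edges := G.edges.filter (fun e => e ∩ U = ∅) ∪
      (G.edges.filter (fun e => (e ∩ U).card = 1)).image (fun e => (e \ U) ∪ {v})
  edge_card := by
    intro e he
    rcases Finset.mem_union.mp he with h | h
    · exact G.edge_card e (Finset.mem_filter.mp h).1
    · rcases Finset.mem_image.mp h with ⟨e₀, he₀, rfl⟩
      rcases Finset.mem_filter.mp he₀ with ⟨he₀G, hc⟩
      have hv₀ : v ∉ e₀ \ U := fun hm => hv (G.edge_sub e₀ he₀G (Finset.mem_sdiff.mp hm).1)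
      have h3 : (e₀ \ U).card + (e₀ ∩ U).card = e₀.card := Finset.card_sdiff_add_card_inter e₀ U
      have h4 := G.edge_card e₀ he₀G
      rw [Finset.union_comm, ← Finset.insert_eq, Finset.card_insert_of_notMem hv₀]
      omega
  edge_sub := by
    intro e he
    rcases Finset.mem_union.mp he with h | h
    · rcases Finset.mem_filter.mp h with ⟨heG, hd⟩
      intro x hx
      exact Finset.mem_union_left _ (Finset.mem_sdiff.mpr ⟨G.edge_sub e heG hx,
        fun hxU => by simp [Finset.eq_empty_iff_forall_notMem] at hd; exact hd x hx hxU⟩)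
    · rcases Finset.mem_image.mp h with ⟨e₀, he₀, rfl⟩
      rcases Finset.mem_filter.mp he₀ with ⟨he₀G, _⟩
      intro x hx
      rcases Finset.mem_union.mp hx with h'|h'
      · exact Finset.mem_union_left _ (Finset.mem_sdiff.mpr
          ⟨G.edge_sub e₀ he₀G (Finset.mem_sdiff.mp h').1, (Finset.mem_sdiff.mp h').2⟩)
      · exact Finset.mem_union_right _ h'

lemma reducible_collapse (G : ThreeGraph) (U : Finset ℕ) (v : ℕ) (hv : v ∉ G.verts)
    (h1 : U ⊆ G.verts) (h2 : 2 ≤ U.card) (h3 : U.card < G.verts.card)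
    (h4 : ∀ e ∈ G.edges, (e ∩ U).card ≠ 2) :
    Reducible G (collapseG G U v hv) (inducedG G U) :=
  by exact ⟨U, v, h1, h2, h3, h4, hv, rfl, rfl, rfl, rfl⟩

lemma inU_reduce {G H F : ThreeGraph} (h : Reducible G H F) (hH : InU H) (hF : InU F) : InU G := by
  rcases hH with ⟨j1, hj1⟩
  rcases hF with ⟨j2, hj2⟩
  refine ⟨(max j1 j2) + 2, MemU.reduce (max j1 j2) G H F h ?_ ?_⟩
  · exact memU_le (by omega) hj1
  · exact memU_le (by omega) hj2

lemma inter_restrict {e U s : Finset ℕ} (h : e ⊆ s) : e ∩ U = e ∩ (U ∩ s) := by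
  ext x; simp only [Finset.mem_inter]
  exact ⟨fun ⟨a, b⟩ => ⟨a, b, h a⟩, fun ⟨a, b, _⟩ => ⟨a, b⟩⟩

lemma supp_equiv {A B : ThreeGraph} {f : ℕ → ℕ}
    (hBe : B.edges = A.edges.image (fun e => e.image f)) : supp B = (supp A).image f := by
  unfold supp
  rw [hBe]
  ext y
  simp only [Finset.mem_biUnion, Finset.mem_image, id]
  constructor
  · rintro ⟨e', ⟨e, he, rfl⟩, hy⟩
    rcases Finset.mem_image.mp hy with ⟨x, hx, rfl⟩
    exact ⟨x, ⟨e, he, hx⟩, rfl⟩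
  · rintro ⟨x, ⟨e, he, hx⟩, rfl⟩
    exact ⟨e.image f, ⟨e, he, rfl⟩, Finset.mem_image_of_mem f hx⟩

lemma memU_equiv {i : ℕ} {A : ThreeGraph} (h : MemU i A) : ∀ B, Equivv A B → MemU i B := by
  induction h with
  | zero G hG =>
    rintro B ⟨f, hf, hBe⟩
    obtain ⟨V1, V2, V3, d12, d13, d23, hun, hcond⟩ := hG
    set W2 := (V2 ∩ supp G).image f with hW2
    set W3 := (V3 ∩ supp G).image f with hW3
    have hsuppB : supp B = (supp G).image f := supp_equiv hBe
    have hW2sub : W2 ⊆ B.verts := by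
      refine subset_trans ?_ (supp_subset_verts B)
      rw [hsuppB]; exact Finset.image_subset_image Finset.inter_subset_right
    have hW3sub : W3 ⊆ B.verts := by
      refine subset_trans ?_ (supp_subset_verts B)
      rw [hsuppB]; exact Finset.image_subset_image Finset.inter_subset_right
    have hd23 : Disjoint W2 W3 := by
      rw [Finset.disjoint_left]
      intro a ha2 ha3
      rcases Finset.mem_image.mp ha2 with ⟨x, hx, rfl⟩
      rcases Finset.mem_image.mp ha3 with ⟨y, hy, hyx⟩
      have := hf (Finset.mem_coe.mpr ((Finset.mem_inter.mp hy).2))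
        (Finset.mem_coe.mpr ((Finset.mem_inter.mp hx).2)) hyx
      subst this
      exact Finset.disjoint_left.mp d23 (Finset.mem_inter.mp hx).1 (Finset.mem_inter.mp hy).1
    refine MemU.zero B ⟨B.verts \ (W2 ∪ W3), W2, W3, ?_, ?_, hd23, ?_, ?_⟩
    · exact Finset.sdiff_disjoint.mono_right Finset.subset_union_left
    · exact Finset.sdiff_disjoint.mono_right Finset.subset_union_right
    · rw [Finset.union_assoc, Finset.sdiff_union_of_subset (Finset.union_subset hW2sub hW3sub)]
    · intro e' he'
      rw [hBe] at he'
      rcases Finset.mem_image.mp he' with ⟨e, he, rfl⟩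
      have hes : e ⊆ supp G := edge_subset_supp he
      have h2 : e.image f ∩ W2 = (e ∩ V2).image f := by
        rw [hW2, ← img_inter f (supp G) e (V2 ∩ supp G) hf hes Finset.inter_subset_right,
          ← inter_restrict hes]
      have h3 : e.image f ∩ W3 = (e ∩ V3).image f := by
        rw [hW3, ← img_inter f (supp G) e (V3 ∩ supp G) hf hes Finset.inter_subset_right,
          ← inter_restrict hes]
      obtain ⟨c1, c2, c3⟩ := hcond e he
      have hc2 : (e.image f ∩ W2).card = 1 := by
        rw [h2, Finset.card_image_of_injOn (hf.mono (by
          intro x hx; exact Finset.mem_coe.mpr (hes (Finset.mem_inter.mp hx).1)))]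
        exact c2
      have hc3 : (e.image f ∩ W3).card = 1 := by
        rw [h3, Finset.card_image_of_injOn (hf.mono (by
          intro x hx; exact Finset.mem_coe.mpr (hes (Finset.mem_inter.mp hx).1)))]
        exact c3
      refine ⟨?_, hc2, hc3⟩
      have hsub : e.image f ⊆ B.verts := B.edge_sub _ (by
        rw [hBe]; exact Finset.mem_image_of_mem _ he)
      have hinter : e.image f ∩ (B.verts \ (W2 ∪ W3)) = e.image f \ (W2 ∪ W3) := by
        ext x
        simp only [Finset.mem_inter, Finset.mem_sdiff]
        exact ⟨fun ⟨a, _, c⟩ => ⟨a, c⟩, fun ⟨a, c⟩ => ⟨a, hsub a, c⟩⟩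
      have hcard : (e.image f).card = 3 := B.edge_card _ (by
        rw [hBe]; exact Finset.mem_image_of_mem _ he)
      have hu : (e.image f ∩ (W2 ∪ W3)).card = 2 := by
        rw [Finset.inter_union_distrib_left,
          Finset.card_union_of_disjoint (hd23.mono Finset.inter_subset_right Finset.inter_subset_right),
          hc2, hc3]
      have := Finset.card_sdiff_add_card_inter (e.image f) (W2 ∪ W3)
      rw [hinter]
      omega
  | one G hG =>
    rintro B ⟨f, hf, hBe⟩
    obtain ⟨W, hWsub, hWcond⟩ := hG
    refine MemU.one B ⟨(W ∩ supp G).image f, ?_, ?_⟩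
    · refine subset_trans ?_ (supp_subset_verts B)
      rw [supp_equiv hBe]; exact Finset.image_subset_image Finset.inter_subset_right
    · intro e' he'
      rw [hBe] at he'
      rcases Finset.mem_image.mp he' with ⟨e, he, rfl⟩
      have hes : e ⊆ supp G := edge_subset_supp he
      rw [← img_inter f (supp G) e (W ∩ supp G) hf hes Finset.inter_subset_right,
        ← inter_restrict hes,
        Finset.card_image_of_injOn (hf.mono (by
          intro x hx; exact Finset.mem_coe.mpr (hes (Finset.mem_inter.mp hx).1)))]
      exact hWcond e he
  | mono i G hG ih =>
    intro B hB
    exact MemU.mono _ _ (ih B hB)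
  | reduce i G Hc Fc hred hH hF ihH ihF =>
    rintro B ⟨f, hf, hBe⟩
    obtain ⟨U, v, hUsub, hU2, hUlt, hU4, hv, hHv, hHe, hFv, hFe⟩ := hred
    have hsuppB : supp B = (supp G).image f := supp_equiv hBe
    by_cases hsupp : supp G ⊆ U
    · -- all edges inside U
      have hFeq : Fc.edges = G.edges := by
        rw [hFe]
        apply Finset.filter_true_of_mem
        intro e he
        exact subset_trans (edge_subset_supp he) hsupp
      have hsF : supp Fc = supp G := by unfold supp; rw [hFeq]
      exact ihF B ⟨f, by rw [hsF]; exact hf, by rw [hFeq]; exact hBe⟩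
    · obtain ⟨w, hwS, hwU⟩ := Finset.not_subset.mp hsupp
      set Us := U ∩ supp G with hUs
      have hUsS : Us ⊆ supp G := Finset.inter_subset_right
      have hints : ∀ e ∈ G.edges, e ∩ U = e ∩ Us := fun e he => inter_restrict (edge_subset_supp he)
      rcases Nat.lt_or_ge Us.card 2 with hlt | hge
      · rcases Nat.eq_zero_or_pos Us.card with h0 | h1
        · -- Us = ∅ : Hc has the same edges as G
          have hUsE : Us = ∅ := Finset.card_eq_zero.mp h0
          have hHeq : Hc.edges = G.edges := by
            rw [hHe]
            have h1 : G.edges.filter (fun e => e ∩ U = ∅) = G.edges := by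
              apply Finset.filter_true_of_mem
              intro e he; rw [hints e he, hUsE, Finset.inter_empty]
            have h2 : G.edges.filter (fun e => (e ∩ U).card = 1) = ∅ := by
              rw [Finset.filter_eq_empty_iff]
              intro e he
              rw [hints e he, hUsE, Finset.inter_empty]
              simp
            rw [h1, h2, Finset.image_empty, Finset.union_empty]
          have hsH : supp Hc = supp G := by unfold supp; rw [hHeq]
          exact memU_le (Nat.le_succ _)
            (ihH B ⟨f, by rw [hsH]; exact hf, by rw [hHeq]; exact hBe⟩)
        · -- 1 ≤ Us.card < 2 : Us = {u}
          obtain ⟨u, hu⟩ := Finset.card_eq_one.mp (by omega : Us.card = 1)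
          have huU : u ∈ U := by
            have : u ∈ Us := hu ▸ Finset.mem_singleton_self u
            exact (Finset.mem_inter.mp this).1
          have huS : u ∈ supp G := by
            have : u ∈ Us := hu ▸ Finset.mem_singleton_self u
            exact (Finset.mem_inter.mp this).2
          have hkey : ∀ e ∈ G.edges, e ∩ U ⊆ {u} := by
            intro e he
            rw [hints e he, hu]
            exact Finset.inter_subset_right
          set g : ℕ → ℕ := fun x => if x = v then f u else f x with hg
          have hnev : ∀ x ∈ supp G, x ≠ v := by
            intro x hx hxv
            exact hv (hxv ▸ supp_subset_verts G hx)
          have claim1 : ∀ x ∈ supp Hc, x = v ∨ (x ∈ supp G ∧ x ∉ U) := by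
            intro x hx
            rcases Finset.mem_biUnion.mp hx with ⟨h, hh, hxh⟩
            simp only [id] at hxh
            rw [hHe] at hh
            rcases Finset.mem_union.mp hh with h' | h'
            · rcases Finset.mem_filter.mp h' with ⟨heG, hd⟩
              refine Or.inr ⟨edge_subset_supp heG hxh, fun hxU => ?_⟩
              exact Finset.notMem_empty x (hd ▸ Finset.mem_inter.mpr ⟨hxh, hxU⟩)
            · rcases Finset.mem_image.mp h' with ⟨e, hef, rfl⟩
              rcases Finset.mem_filter.mp hef with ⟨heG, _⟩
              rcases Finset.mem_union.mp hxh with h'' | h''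
              · exact Or.inr ⟨edge_subset_supp heG (Finset.mem_sdiff.mp h'').1,
                  (Finset.mem_sdiff.mp h'').2⟩
              · exact Or.inl (Finset.mem_singleton.mp h'')
          have ginj : Set.InjOn g ↑(supp Hc) := by
            intro x hx y hy hxy
            rcases claim1 x (Finset.mem_coe.mp hx) with rfl | ⟨hxS, hxU⟩ <;>
              rcases claim1 y (Finset.mem_coe.mp hy) with rfl | ⟨hyS, hyU⟩
            · rfl
            · rw [hg] at hxy
              simp only [if_pos rfl, if_neg (hnev y hyS)] at hxy
              exact absurd (huU) (hf huS hyS hxy ▸ hyU)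
            · rw [hg] at hxy
              simp only [if_pos rfl, if_neg (hnev x hxS)] at hxy
              exact absurd (huU) (hf huS hxS hxy.symm ▸ hxU)
            · rw [hg] at hxy
              simp only [if_neg (hnev x hxS), if_neg (hnev y hyS)] at hxy
              exact hf hxS hyS hxy
          have himgeq : ∀ e ∈ G.edges, e.image g = e.image f := by
            intro e he
            apply Finset.image_congr
            intro x hx
            simp only [hg, if_neg (hnev x (edge_subset_supp he (Finset.mem_coe.mp hx)))]
          have hcollapse : ∀ e ∈ G.edges, (e ∩ U).card = 1 → ((e \ U) ∪ {v}).image g = e.image f := by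
            intro e he hc1
            have heU : e ∩ U = {u} := by
              rcases Finset.subset_singleton_iff.mp (hkey e he) with h' | h'
              · rw [h'] at hc1; simp at hc1
              · exact h'
            have hsplit : (e \ U) ∪ {u} = e := by
              ext x
              simp only [Finset.mem_union, Finset.mem_sdiff, Finset.mem_singleton]
              constructor
              · rintro (⟨h1, _⟩ | h1)
                · exact h1
                · subst h1
                  have : x ∈ e ∩ U := heU ▸ Finset.mem_singleton_self x
                  exact (Finset.mem_inter.mp this).1
              · intro hxe
                by_cases hxU : x ∈ U
                · exact Or.inr (Finset.mem_singleton.mp (heU ▸ Finset.mem_inter.mpr ⟨hxe, hxU⟩))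
                · exact Or.inl ⟨hxe, hxU⟩
            rw [Finset.image_union, Finset.image_singleton]
            have h1 : (e \ U).image g = (e \ U).image f := by
              apply Finset.image_congr
              intro x hx
              have : x ∈ e := (Finset.mem_sdiff.mp (Finset.mem_coe.mp hx)).1
              simp only [hg, if_neg (hnev x (edge_subset_supp he this))]
            have h2 : g v = f u := by simp [hg]
            rw [h1, h2, ← Finset.image_singleton f, ← Finset.image_union, hsplit]
          have gedges : B.edges = Hc.edges.image (fun e => e.image g) := by
            rw [hBe, hHe]
            apply Finset.Subset.antisymm
            · intro b hb
              rcases Finset.mem_image.mp hb with ⟨e, he, rfl⟩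
              by_cases hcase : e ∩ U = ∅
              · exact Finset.mem_image.mpr ⟨e, Finset.mem_union_left _
                  (Finset.mem_filter.mpr ⟨he, hcase⟩), himgeq e he⟩
              · have hne : (e ∩ U).card ≠ 0 := by simpa [Finset.card_eq_zero] using hcase
                have hle := Finset.card_le_card (hkey e he)
                rw [Finset.card_singleton] at hle
                have hc1 : (e ∩ U).card = 1 := by omega
                exact Finset.mem_image.mpr ⟨(e \ U) ∪ {v}, Finset.mem_union_right _
                  (Finset.mem_image.mpr ⟨e, Finset.mem_filter.mpr ⟨he, hc1⟩, rfl⟩),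
                  hcollapse e he hc1⟩
            · intro b hb
              rcases Finset.mem_image.mp hb with ⟨h, hh, rfl⟩
              rcases Finset.mem_union.mp hh with h' | h'
              · rcases Finset.mem_filter.mp h' with ⟨heG, _⟩
                exact Finset.mem_image.mpr ⟨h, heG, (himgeq h heG).symm⟩
              · rcases Finset.mem_image.mp h' with ⟨e, hef, rfl⟩
                rcases Finset.mem_filter.mp hef with ⟨heG, hc1⟩
                exact Finset.mem_image.mpr ⟨e, heG, (hcollapse e heG hc1).symm⟩
          exact memU_le (Nat.le_succ _) (ihH B ⟨g, ginj, gedges⟩)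
      · -- 2 ≤ Us.card : genuine collapse
        obtain ⟨v', hv'⟩ := Infinite.exists_notMem_finset B.verts
        set U' := Us.image f with hU'
        have hUsinj : Set.InjOn f ↑Us := hf.mono (Finset.coe_subset.mpr hUsS)
        have hU'card : U'.card = Us.card := Finset.card_image_of_injOn hUsinj
        have hU'subB : U' ⊆ B.verts := by
          refine subset_trans ?_ (supp_subset_verts B)
          rw [hsuppB]; exact Finset.image_subset_image hUsS
        have hinterU : ∀ e ∈ G.edges, (e.image f) ∩ U' = (e ∩ U).image f := by
          intro e he
          rw [hints e he, hU', img_inter f (supp G) e Us hf (edge_subset_supp he) hUsS]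
        have hcardU : ∀ e ∈ G.edges, ((e.image f) ∩ U').card = (e ∩ U).card := by
          intro e he
          rw [hinterU e he]
          exact Finset.card_image_of_injOn (hf.mono (by
            intro x hx
            exact Finset.mem_coe.mpr (edge_subset_supp he (Finset.mem_inter.mp hx).1)))
        have hfwB : f w ∈ B.verts := supp_subset_verts B (hsuppB ▸ Finset.mem_image_of_mem f hwS)
        have hfwU' : f w ∉ U' := by
          intro hmem
          rcases Finset.mem_image.mp hmem with ⟨x, hx, hxw⟩
          have hxweq : x = w := hf (Finset.mem_coe.mpr (hUsS hx)) (Finset.mem_coe.mpr hwS) hxw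
          exact hwU (hxweq ▸ (Finset.mem_inter.mp hx).1)
        have h3' : U'.card < B.verts.card := Finset.card_lt_card
          ((Finset.ssubset_iff_of_subset hU'subB).mpr ⟨f w, hfwB, hfwU'⟩)
        have h4' : ∀ e' ∈ B.edges, (e' ∩ U').card ≠ 2 := by
          intro e' he'
          rw [hBe] at he'
          rcases Finset.mem_image.mp he' with ⟨e, he, rfl⟩
          rw [hcardU e he]
          exact hU4 e he
        have hsuppF : supp Fc ⊆ supp G := by
          intro x hx
          rcases Finset.mem_biUnion.mp hx with ⟨e, he, hxe⟩
          rw [hFe] at he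
          simp only [id] at hxe
          exact edge_subset_supp (Finset.mem_filter.mp he).1 hxe
        have hFedges : (inducedG B U').edges = Fc.edges.image (fun e => e.image f) := by
          show B.edges.filter (fun e => e ⊆ U') = _
          rw [hBe, hFe]
          apply Finset.Subset.antisymm
          · intro b hb
            rcases Finset.mem_filter.mp hb with ⟨hb1, hb2⟩
            rcases Finset.mem_image.mp hb1 with ⟨e, he, rfl⟩
            refine Finset.mem_image.mpr ⟨e, Finset.mem_filter.mpr ⟨he, ?_⟩, rfl⟩
            intro x hx
            have hfx : f x ∈ U' := hb2 (Finset.mem_image_of_mem f hx)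
            rcases Finset.mem_image.mp hfx with ⟨z, hz, hzx⟩
            have hzeq : z = x := hf (Finset.mem_coe.mpr (hUsS hz))
              (Finset.mem_coe.mpr (edge_subset_supp he hx)) hzx
            exact hzeq ▸ (Finset.mem_inter.mp hz).1
          · intro b hb
            rcases Finset.mem_image.mp hb with ⟨e, hef, rfl⟩
            rcases Finset.mem_filter.mp hef with ⟨heG, heU⟩
            refine Finset.mem_filter.mpr ⟨Finset.mem_image_of_mem _ heG, ?_⟩
            intro y hy
            rcases Finset.mem_image.mp hy with ⟨x, hx, rfl⟩
            exact Finset.mem_image_of_mem f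
              (Finset.mem_inter.mpr ⟨heU hx, edge_subset_supp heG hx⟩)
        set g : ℕ → ℕ := fun x => if x = v then v' else f x with hg
        have hnev : ∀ x ∈ supp G, x ≠ v := by
          intro x hx hxv
          exact hv (hxv ▸ supp_subset_verts G hx)
        have claim1 : ∀ x ∈ supp Hc, x = v ∨ (x ∈ supp G ∧ x ∉ U) := by
          intro x hx
          rcases Finset.mem_biUnion.mp hx with ⟨h, hh, hxh⟩
          simp only [id] at hxh
          rw [hHe] at hh
          rcases Finset.mem_union.mp hh with h' | h'
          · rcases Finset.mem_filter.mp h' with ⟨heG, hd⟩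
            refine Or.inr ⟨edge_subset_supp heG hxh, fun hxU => ?_⟩
            exact Finset.notMem_empty x (hd ▸ Finset.mem_inter.mpr ⟨hxh, hxU⟩)
          · rcases Finset.mem_image.mp h' with ⟨e, hef, rfl⟩
            rcases Finset.mem_filter.mp hef with ⟨heG, _⟩
            rcases Finset.mem_union.mp hxh with h'' | h''
            · exact Or.inr ⟨edge_subset_supp heG (Finset.mem_sdiff.mp h'').1,
                (Finset.mem_sdiff.mp h'').2⟩
            · exact Or.inl (Finset.mem_singleton.mp h'')
        have hfvertsB : ∀ y ∈ supp G, f y ≠ v' := by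
          intro y hy hyv
          exact hv' (hyv ▸ supp_subset_verts B (hsuppB ▸ Finset.mem_image_of_mem f hy))
        have ginj : Set.InjOn g ↑(supp Hc) := by
          intro x hx y hy hxy
          rcases claim1 x (Finset.mem_coe.mp hx) with rfl | ⟨hxS, hxU⟩ <;>
            rcases claim1 y (Finset.mem_coe.mp hy) with rfl | ⟨hyS, hyU⟩
          · rfl
          · rw [hg] at hxy
            simp only [if_pos rfl, if_neg (hnev y hyS)] at hxy
            exact absurd hxy.symm (hfvertsB y hyS)
          · rw [hg] at hxy
            simp only [if_pos rfl, if_neg (hnev x hxS)] at hxy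
            exact absurd hxy (hfvertsB x hxS)
          · rw [hg] at hxy
            simp only [if_neg (hnev x hxS), if_neg (hnev y hyS)] at hxy
            exact hf hxS hyS hxy
        have himgeq : ∀ e ∈ G.edges, e.image g = e.image f := by
          intro e he
          apply Finset.image_congr
          intro x hx
          simp only [hg, if_neg (hnev x (edge_subset_supp he (Finset.mem_coe.mp hx)))]
        have hcol : ∀ e ∈ G.edges, ((e \ U) ∪ {v}).image g = ((e.image f) \ U') ∪ {v'} := by
          intro e he
          rw [Finset.image_union, Finset.image_singleton]
          congr 1
          · have h1 : (e \ U).image g = (e \ U).image f := by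
              apply Finset.image_congr
              intro x hx
              have hxe : x ∈ e := (Finset.mem_sdiff.mp (Finset.mem_coe.mp hx)).1
              simp only [hg, if_neg (hnev x (edge_subset_supp he hxe))]
            have h2 : e \ U = e \ Us := by
              ext x
              simp only [Finset.mem_sdiff, hUs, Finset.mem_inter]
              constructor
              · rintro ⟨hxe, hxU⟩
                exact ⟨hxe, fun ⟨a, _⟩ => hxU a⟩
              · rintro ⟨hxe, hxU⟩
                exact ⟨hxe, fun a => hxU ⟨a, edge_subset_supp he hxe⟩⟩
            rw [h1, h2, img_sdiff f (supp G) e Us hf (edge_subset_supp he) hUsS]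
          · simp [hg]
        have hHedges : (collapseG B U' v' hv').edges = Hc.edges.image (fun e => e.image g) := by
          show B.edges.filter (fun e => e ∩ U' = ∅) ∪
            (B.edges.filter (fun e => (e ∩ U').card = 1)).image (fun e => (e \ U') ∪ {v'}) = _
          rw [hBe, hHe]
          apply Finset.Subset.antisymm
          · intro b hb
            rcases Finset.mem_union.mp hb with h' | h'
            · rcases Finset.mem_filter.mp h' with ⟨hb1, hb2⟩
              rcases Finset.mem_image.mp hb1 with ⟨e, he, rfl⟩
              have heU : e ∩ U = ∅ := by
                have := hinterU e he
                rw [hb2] at this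
                exact Finset.image_eq_empty.mp this.symm
              exact Finset.mem_image.mpr ⟨e, Finset.mem_union_left _
                (Finset.mem_filter.mpr ⟨he, heU⟩), himgeq e he⟩
            · rcases Finset.mem_image.mp h' with ⟨e', he'f, rfl⟩
              rcases Finset.mem_filter.mp he'f with ⟨hb1, hb2⟩
              rcases Finset.mem_image.mp hb1 with ⟨e, he, rfl⟩
              have hc1 : (e ∩ U).card = 1 := by rw [← hcardU e he]; exact hb2
              exact Finset.mem_image.mpr ⟨(e \ U) ∪ {v}, Finset.mem_union_right _
                (Finset.mem_image.mpr ⟨e, Finset.mem_filter.mpr ⟨he, hc1⟩, rfl⟩),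
                hcol e he⟩
          · intro b hb
            rcases Finset.mem_image.mp hb with ⟨h, hh, rfl⟩
            rcases Finset.mem_union.mp hh with h' | h'
            · rcases Finset.mem_filter.mp h' with ⟨heG, hd⟩
              refine Finset.mem_union_left _ (Finset.mem_filter.mpr ⟨?_, ?_⟩)
              · rw [himgeq h heG]
                exact Finset.mem_image_of_mem _ heG
              · rw [himgeq h heG, hinterU h heG, hd]
                simp
            · rcases Finset.mem_image.mp h' with ⟨e, hef, rfl⟩
              rcases Finset.mem_filter.mp hef with ⟨heG, hc1⟩
              rw [hcol e heG]
              refine Finset.mem_union_right _ (Finset.mem_image.mpr ⟨e.image f,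
                Finset.mem_filter.mpr ⟨Finset.mem_image_of_mem _ heG, ?_⟩, rfl⟩)
              rw [hcardU e heG]
              exact hc1
        exact MemU.reduce i B (collapseG B U' v' hv') (inducedG B U')
          (reducible_collapse B U' v' hv' hU'subB (by rw [hU'card]; exact hge) h3' h4')
          (ihH _ ⟨g, ginj, hHedges⟩)
          (ihF _ ⟨f, hf.mono (Finset.coe_subset.mpr hsuppF), hFedges⟩)

lemma inU_equiv {A B : ThreeGraph} (hA : InU A) (h : Equivv A B) : InU B := by
  rcases hA with ⟨i, hi⟩
  exact ⟨i, memU_equiv hi B h⟩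

lemma main_base (t : ℕ) (G Hh : ThreeGraph) (V : ℕ → Finset ℕ)
    (hdisj : ∀ i j, i < t → j < t → i ≠ j → Disjoint (V i) (V j))
    (hbi : (Finset.range t).biUnion V = G.verts)
    (hsmall : ∀ i, i < t → (V i).card ≤ 1)
    (hHedge : ∀ s, s ∈ Hh.edges ↔ s.card = 3 ∧ s ⊆ Finset.range t ∧
      ∃ e ∈ G.edges, ∀ i ∈ s, (e ∩ V i).card = 1)
    (hHU : InU Hh) : InU G := by
  classical
  have hsing : ∀ i, i < t → ∀ x ∈ V i, V i = {x} := by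
    intro i hi x hx
    exact Finset.eq_singleton_iff_unique_mem.mpr
      ⟨hx, fun y hy => Finset.card_le_one.mp (hsmall i hi) y hy x hx⟩
  set g : ℕ → ℕ := fun i => if h : (V i).Nonempty then h.choose else 0 with hgdef
  have hgmem : ∀ i, (V i).Nonempty → g i ∈ V i := by
    intro i h
    simp only [hgdef, dif_pos h]
    exact h.choose_spec
  set fI : ℕ → ℕ := fun x => if h : ∃ i, i < t ∧ x ∈ V i then h.choose else 0 with hfdef
  have hfI : ∀ x ∈ G.verts, fI x < t ∧ x ∈ V (fI x) := by
    intro x hx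
    have hex : ∃ i, i < t ∧ x ∈ V i := by
      rw [← hbi] at hx
      rcases Finset.mem_biUnion.mp hx with ⟨i, hi, hxV⟩
      exact ⟨i, Finset.mem_range.mp hi, hxV⟩
    simp only [hfdef, dif_pos hex]
    exact hex.choose_spec
  have hmem : ∀ k ∈ supp Hh, k < t ∧ (V k).Nonempty := by
    intro k hk
    rcases Finset.mem_biUnion.mp hk with ⟨s, hs, hks⟩
    simp only [id] at hks
    obtain ⟨_, hsub, e, he, hone⟩ := (hHedge s).mp hs
    refine ⟨Finset.mem_range.mp (hsub hks), ?_⟩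
    have h1 : (e ∩ V k).Nonempty := Finset.card_pos.mp (by rw [hone k hks]; omega)
    obtain ⟨y, hy⟩ := h1
    exact ⟨y, (Finset.mem_inter.mp hy).2⟩
  have hginj : Set.InjOn g ↑(supp Hh) := by
    intro i hi j hj hij
    obtain ⟨hit, hiN⟩ := hmem i (Finset.mem_coe.mp hi)
    obtain ⟨hjt, hjN⟩ := hmem j (Finset.mem_coe.mp hj)
    by_contra hne
    exact Finset.disjoint_left.mp (hdisj i j hit hjt hne) (hgmem i hiN)
      (hij ▸ hgmem j hjN)
  have hsingg : ∀ i, i < t → ∀ e ∈ G.edges, (e ∩ V i).card = 1 → e ∩ V i = {g i} := by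
    intro i hit e he h1
    obtain ⟨x, hx⟩ := Finset.card_eq_one.mp h1
    have hxV : x ∈ V i := (Finset.mem_inter.mp (hx ▸ Finset.mem_singleton_self x)).2
    have hVx : V i = {x} := hsing i hit x hxV
    have hne : (V i).Nonempty := ⟨x, hxV⟩
    have hgi : g i = x := by
      have := hgmem i hne
      rw [hVx] at this
      exact Finset.mem_singleton.mp this
    rw [hx, hgi]
  apply inU_equiv hHU
  refine ⟨g, hginj, ?_⟩
  apply Finset.Subset.antisymm
  · -- G.edges ⊆ image
    intro e he
    have hecard := G.edge_card e he
    have hesub := G.edge_sub e he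
    have hfinj : Set.InjOn fI ↑e := by
      intro x hx y hy hxy
      obtain ⟨hxt, hxV⟩ := hfI x (hesub (Finset.mem_coe.mp hx))
      obtain ⟨hyt, hyV⟩ := hfI y (hesub (Finset.mem_coe.mp hy))
      rw [hxy] at hxV
      have := hsing (fI y) hyt y hyV
      rw [this] at hxV
      exact Finset.mem_singleton.mp hxV
    have hscard : (e.image fI).card = 3 := by
      rw [Finset.card_image_of_injOn hfinj, hecard]
    have hssub : e.image fI ⊆ Finset.range t := by
      intro i hi
      rcases Finset.mem_image.mp hi with ⟨x, hx, rfl⟩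
      exact Finset.mem_range.mpr (hfI x (hesub hx)).1
    have hone : ∀ i ∈ e.image fI, (e ∩ V i).card = 1 := by
      intro i hi
      rcases Finset.mem_image.mp hi with ⟨x, hx, rfl⟩
      obtain ⟨hxt, hxV⟩ := hfI x (hesub hx)
      have hVx : V (fI x) = {x} := hsing _ hxt x hxV
      have : e ∩ V (fI x) = {x} := by
        rw [hVx]
        ext y
        simp only [Finset.mem_inter, Finset.mem_singleton]
        exact ⟨fun ⟨_, h⟩ => h, fun h => ⟨h ▸ hx, h⟩⟩
      rw [this, Finset.card_singleton]
    have hsE : e.image fI ∈ Hh.edges := (hHedge _).mpr ⟨hscard, hssub, e, he, hone⟩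
    refine Finset.mem_image.mpr ⟨e.image fI, hsE, ?_⟩
    have hgfx : ∀ x ∈ e, g (fI x) = x := by
      intro x hx
      obtain ⟨hxt, hxV⟩ := hfI x (hesub hx)
      have hVx := hsing _ hxt x hxV
      have hne : (V (fI x)).Nonempty := ⟨x, hxV⟩
      have := hgmem _ hne
      rw [hVx] at this
      exact Finset.mem_singleton.mp this
    rw [Finset.image_image]
    calc e.image (g ∘ fI) = e.image id := Finset.image_congr (fun x hx => hgfx x hx)
    _ = e := Finset.image_id
  · -- image ⊆ G.edges
    intro b hb
    rcases Finset.mem_image.mp hb with ⟨s, hs, rfl⟩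
    obtain ⟨hcard3, hsub, e, he, hone⟩ := (hHedge s).mp hs
    have hsupps : (s : Set ℕ) ⊆ ↑(supp Hh) := Finset.coe_subset.mpr (edge_subset_supp hs)
    have hgie : ∀ i ∈ s, g i ∈ e := by
      intro i hi
      have := hsingg i (Finset.mem_range.mp (hsub hi)) e he (hone i hi)
      have hmemi : g i ∈ e ∩ V i := this ▸ Finset.mem_singleton_self (g i)
      exact (Finset.mem_inter.mp hmemi).1
    have hsubse : s.image g ⊆ e := by
      intro y hy
      rcases Finset.mem_image.mp hy with ⟨i, hi, rfl⟩
      exact hgie i hi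
    have hcardim : (s.image g).card = 3 := by
      rw [Finset.card_image_of_injOn (hginj.mono hsupps), hcard3]
    have : s.image g = e := Finset.eq_of_subset_of_card_le hsubse
      (by rw [hcardim, G.edge_card e he])
    rw [this]
    exact he

lemma main (n : ℕ) : ∀ (t : ℕ) (G Hh : ThreeGraph) (V : ℕ → Finset ℕ),
    ((Finset.range t).filter (fun i => 2 ≤ (V i).card)).card ≤ n →
    (∀ i j, i < t → j < t → i ≠ j → Disjoint (V i) (V j)) →
    (Finset.range t).biUnion V = G.verts →
    (∀ e ∈ G.edges, ∀ i, i < t → (e ∩ V i).card ≠ 2) →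
    (∀ i, i < t → InU (inducedG G (V i))) →
    (∀ s, s ∈ Hh.edges ↔ s.card = 3 ∧ s ⊆ Finset.range t ∧
      ∃ e ∈ G.edges, ∀ i ∈ s, (e ∩ V i).card = 1) →
    InU Hh → InU G := by
  induction n with
  | zero =>
    intro t G Hh V hn hdisj hbi h2 hind hHedge hHU
    refine main_base t G Hh V hdisj hbi ?_ hHedge hHU
    intro i hit
    by_contra hc
    have : i ∈ (Finset.range t).filter (fun i => 2 ≤ (V i).card) :=
      Finset.mem_filter.mpr ⟨Finset.mem_range.mpr hit, by omega⟩
    have := Finset.card_pos.mpr ⟨i, this⟩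
    omega
  | succ n ih =>
    intro t G Hh V hn hdisj hbi h2 hind hHedge hHU
    by_cases hbig : ∃ i, i < t ∧ 2 ≤ (V i).card
    · obtain ⟨i₀, hi₀t, hi₀c⟩ := hbig
      have hVsub : ∀ j, j < t → V j ⊆ G.verts := by
        intro j hj x hx
        rw [← hbi]
        exact Finset.mem_biUnion.mpr ⟨j, Finset.mem_range.mpr hj, hx⟩
      by_cases hall : G.verts ⊆ V i₀
      · have heq : inducedG G (V i₀) = G := by
          refine tg_ext ?_ ?_
          · exact Finset.Subset.antisymm (hVsub i₀ hi₀t) hall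
          · show G.edges.filter _ = G.edges
            apply Finset.filter_true_of_mem
            intro e he
            exact subset_trans (G.edge_sub e he) hall
        rw [← heq]
        exact hind i₀ hi₀t
      · obtain ⟨wv, hwv, hwnv⟩ := Finset.not_subset.mp hall
        obtain ⟨v, hv⟩ := Infinite.exists_notMem_finset G.verts
        set G₁ := collapseG G (V i₀) v hv with hG₁def
        set V' := Function.update V i₀ {v} with hV'def
        have hvnotV : ∀ j, j < t → v ∉ V j := fun j hj hmem => hv (hVsub j hj hmem)
        have hV'e : ∀ j, j ≠ i₀ → V' j = V j := fun j hj => Function.update_of_ne hj _ _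
        have hV'i₀ : V' i₀ = {v} := Function.update_self _ _ _
        have hG₁edges : G₁.edges = G.edges.filter (fun e => e ∩ V i₀ = ∅) ∪
            (G.edges.filter (fun e => (e ∩ V i₀).card = 1)).image
              (fun e => (e \ V i₀) ∪ {v}) := rfl
        have hG₁verts : G₁.verts = (G.verts \ V i₀) ∪ {v} := rfl
        have hEc : ∀ e ∈ G.edges, ∀ i, i < t → i ≠ i₀ →
            ((e \ V i₀) ∪ {v}) ∩ V i = e ∩ V i := by
          intro e he i hit hine
          ext y
          simp only [Finset.mem_inter, Finset.mem_union, Finset.mem_sdiff,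
            Finset.mem_singleton]
          constructor
          · rintro ⟨⟨h1, _⟩ | h1, h2'⟩
            · exact ⟨h1, h2'⟩
            · exact absurd (h1 ▸ h2') (hvnotV i hit)
          · rintro ⟨h1, h2'⟩
            exact ⟨Or.inl ⟨h1, fun hmem =>
              Finset.disjoint_left.mp (hdisj i i₀ hit hi₀t hine) h2' hmem⟩, h2'⟩
        have hvnotine : ∀ e ∈ G.edges, v ∉ e := fun e he hmem => hv (G.edge_sub e he hmem)
        -- measure
        have hmeas : ((Finset.range t).filter (fun i => 2 ≤ (V' i).card)).card ≤ n := by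
          have hfeq : (Finset.range t).filter (fun i => 2 ≤ (V' i).card) =
              ((Finset.range t).filter (fun i => 2 ≤ (V i).card)).erase i₀ := by
            ext j
            simp only [Finset.mem_erase, Finset.mem_filter, Finset.mem_range]
            constructor
            · rintro ⟨hjt, hjc⟩
              have hji : j ≠ i₀ := by
                rintro rfl
                rw [hV'i₀] at hjc
                simp at hjc
              rw [hV'e j hji] at hjc
              exact ⟨hji, hjt, hjc⟩
            · rintro ⟨hji, hjt, hjc⟩
              rw [hV'e j hji]
              exact ⟨hjt, hjc⟩
          have hmem0 : i₀ ∈ (Finset.range t).filter (fun i => 2 ≤ (V i).card) :=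
            Finset.mem_filter.mpr ⟨Finset.mem_range.mpr hi₀t, hi₀c⟩
          rw [hfeq, Finset.card_erase_of_mem hmem0]
          omega
        have hdisj' : ∀ i j, i < t → j < t → i ≠ j → Disjoint (V' i) (V' j) := by
          intro i j hit hjt hij
          by_cases hi : i = i₀
          · subst hi
            rw [hV'i₀, hV'e j (Ne.symm hij)]
            exact Finset.disjoint_singleton_left.mpr (hvnotV j hjt)
          · by_cases hj : j = i₀
            · subst hj
              rw [hV'i₀, hV'e i hi]
              exact Finset.disjoint_singleton_right.mpr (hvnotV i hit)
            · rw [hV'e i hi, hV'e j hj]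
              exact hdisj i j hit hjt hij
        have hbi' : (Finset.range t).biUnion V' = G₁.verts := by
          rw [hG₁verts]
          ext x
          simp only [Finset.mem_biUnion, Finset.mem_union, Finset.mem_sdiff,
            Finset.mem_singleton, Finset.mem_range]
          constructor
          · rintro ⟨j, hjt, hx⟩
            by_cases hj : j = i₀
            · subst hj
              rw [hV'i₀] at hx
              exact Or.inr (Finset.mem_singleton.mp hx)
            · rw [hV'e j hj] at hx
              refine Or.inl ⟨hVsub j hjt hx, fun hmem =>
                Finset.disjoint_left.mp (hdisj j i₀ hjt hi₀t hj) hx hmem⟩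
          · rintro (⟨hxG, hxV⟩ | hxv)
            · rw [← hbi] at hxG
              rcases Finset.mem_biUnion.mp hxG with ⟨j, hjt, hx⟩
              have hj : j ≠ i₀ := fun h => hxV (h ▸ hx)
              exact ⟨j, Finset.mem_range.mp hjt, (hV'e j hj) ▸ hx⟩
            · subst hxv
              exact ⟨i₀, hi₀t, hV'i₀ ▸ Finset.mem_singleton_self _⟩
        have h2' : ∀ e' ∈ G₁.edges, ∀ i, i < t → (e' ∩ V' i).card ≠ 2 := by
          intro e' he' i hit
          rw [hG₁edges] at he'
          rcases Finset.mem_union.mp he' with h' | h'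
          · rcases Finset.mem_filter.mp h' with ⟨heG, _⟩
            by_cases hi : i = i₀
            · rw [hi, hV'i₀]
              have : e' ∩ {v} = ∅ := by
                rw [Finset.eq_empty_iff_forall_notMem]
                intro y hy
                rcases Finset.mem_inter.mp hy with ⟨h1, h2''⟩
                exact hvnotine e' heG (Finset.mem_singleton.mp h2'' ▸ h1)
              rw [this]
              simp
            · rw [hV'e i hi]
              exact h2 e' heG i hit
          · rcases Finset.mem_image.mp h' with ⟨e, hef, rfl⟩
            rcases Finset.mem_filter.mp hef with ⟨heG, hc1⟩
            by_cases hi : i = i₀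
            · rw [hi, hV'i₀]
              have : ((e \ V i₀) ∪ {v}) ∩ {v} = {v} := by
                rw [Finset.inter_eq_right]
                intro y hy
                exact Finset.mem_union_right _ hy
              rw [this]
              simp
            · rw [hV'e i hi, hEc e heG i hit hi]
              exact h2 e heG i hit
        have hind' : ∀ i, i < t → InU (inducedG G₁ (V' i)) := by
          intro i hit
          by_cases hi : i = i₀
          · rw [hi]
            have hempty : (inducedG G₁ (V' i₀)).edges = ∅ := by
              show G₁.edges.filter _ = ∅
              rw [Finset.filter_eq_empty_iff]
              intro e' he' hsub
              have h3 := G₁.edge_card e' he'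
              have : e'.card ≤ (V' i₀).card := Finset.card_le_card hsub
              rw [hV'i₀, Finset.card_singleton] at this
              omega
            refine ⟨0, MemU.zero _ ⟨V' i₀, ∅, ∅, ?_, ?_, ?_, ?_, ?_⟩⟩
            · simp
            · simp
            · simp
            · simp [inducedG]
            · intro e he
              rw [hempty] at he
              exact absurd he (Finset.notMem_empty e)
          · have heq : inducedG G₁ (V' i) = inducedG G (V i) := by
              refine tg_ext (by rw [hV'e i hi]; rfl) ?_
              show G₁.edges.filter (fun e => e ⊆ V' i) = G.edges.filter (fun e => e ⊆ V i)
              rw [hV'e i hi]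
              apply Finset.Subset.antisymm
              · intro e' he'
                rcases Finset.mem_filter.mp he' with ⟨he'G, he'sub⟩
                rw [hG₁edges] at he'G
                rcases Finset.mem_union.mp he'G with h' | h'
                · exact Finset.mem_filter.mpr ⟨(Finset.mem_filter.mp h').1, he'sub⟩
                · rcases Finset.mem_image.mp h' with ⟨e, hef, rfl⟩
                  rcases Finset.mem_filter.mp hef with ⟨heG, _⟩
                  exact absurd (he'sub (Finset.mem_union_right _
                    (Finset.mem_singleton_self v))) (hvnotV i hit)
              · intro e he
                rcases Finset.mem_filter.mp he with ⟨heG, hesub⟩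
                refine Finset.mem_filter.mpr ⟨?_, hesub⟩
                rw [hG₁edges]
                refine Finset.mem_union_left _ (Finset.mem_filter.mpr ⟨heG, ?_⟩)
                rw [Finset.eq_empty_iff_forall_notMem]
                intro y hy
                rcases Finset.mem_inter.mp hy with ⟨h1, h2''⟩
                exact Finset.disjoint_left.mp (hdisj i i₀ hit hi₀t hi) (hesub h1) h2''
            rw [heq]
            exact hind i hit
        have hHedge' : ∀ s, s ∈ Hh.edges ↔ s.card = 3 ∧ s ⊆ Finset.range t ∧
            ∃ e' ∈ G₁.edges, ∀ i ∈ s, (e' ∩ V' i).card = 1 := by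
          intro s
          rw [hHedge s]
          refine and_congr_right fun h3 => and_congr_right fun hsub => ⟨?_, ?_⟩
          · rintro ⟨e, he, hone⟩
            have hne2 := h2 e he i₀ hi₀t
            have hle3 : (e ∩ V i₀).card ≤ 3 := by
              have := Finset.card_le_card (Finset.inter_subset_left : e ∩ V i₀ ⊆ e)
              rw [G.edge_card e he] at this
              exact this
            by_cases hc0 : e ∩ V i₀ = ∅
            · have hmem1 : e ∈ G₁.edges := by
                rw [hG₁edges]
                exact Finset.mem_union_left _ (Finset.mem_filter.mpr ⟨he, hc0⟩)
              refine ⟨e, hmem1, ?_⟩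
              intro i hi
              have hii : i ≠ i₀ := by
                rintro rfl
                have := hone i hi
                rw [hc0] at this
                simp at this
              rw [hV'e i hii]
              exact hone i hi
            · by_cases hc1 : (e ∩ V i₀).card = 1
              · have hmem1 : (e \ V i₀) ∪ {v} ∈ G₁.edges := by
                  rw [hG₁edges]
                  exact Finset.mem_union_right _
                    (Finset.mem_image.mpr ⟨e, Finset.mem_filter.mpr ⟨he, hc1⟩, rfl⟩)
                refine ⟨(e \ V i₀) ∪ {v}, hmem1, ?_⟩
                intro i hi
                by_cases hii : i = i₀
                · rw [hii, hV'i₀]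
                  have : ((e \ V i₀) ∪ {v}) ∩ {v} = {v} := by
                    rw [Finset.inter_eq_right]
                    intro y hy
                    exact Finset.mem_union_right _ hy
                  rw [this, Finset.card_singleton]
                · rw [hV'e i hii, hEc e he i (Finset.mem_range.mp (hsub hi)) hii]
                  exact hone i hi
              · exfalso
                have hc3 : (e ∩ V i₀).card = 3 := by
                  have h0 : (e ∩ V i₀).card ≠ 0 := by
                    simpa [Finset.card_eq_zero] using hc0
                  omega
                have hesub : e ⊆ V i₀ := by
                  rw [← Finset.inter_eq_left]
                  apply Finset.eq_of_subset_of_card_le Finset.inter_subset_left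
                  rw [hc3, G.edge_card e he]
                obtain ⟨i, hi⟩ := Finset.card_pos.mp (by rw [h3]; omega : 0 < s.card)
                have hone_i := hone i hi
                by_cases hii : i = i₀
                · subst hii
                  omega
                · have : e ∩ V i = ∅ := by
                    rw [Finset.eq_empty_iff_forall_notMem]
                    intro y hy
                    rcases Finset.mem_inter.mp hy with ⟨h1, h2''⟩
                    exact Finset.disjoint_left.mp
                      (hdisj i₀ i hi₀t (Finset.mem_range.mp (hsub hi)) (Ne.symm hii))
                      (hesub h1) h2''
                  rw [this] at hone_i
                  simp at hone_i
          · rintro ⟨e', he', hone'⟩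
            rw [hG₁edges] at he'
            rcases Finset.mem_union.mp he' with h' | h'
            · rcases Finset.mem_filter.mp h' with ⟨heG, _⟩
              refine ⟨e', heG, ?_⟩
              intro i hi
              have hii : i ≠ i₀ := by
                rintro rfl
                have := hone' i hi
                rw [hV'i₀] at this
                have hvv : e' ∩ {v} = ∅ := by
                  rw [Finset.eq_empty_iff_forall_notMem]
                  intro y hy
                  rcases Finset.mem_inter.mp hy with ⟨h1, h2''⟩
                  exact hvnotine e' heG (Finset.mem_singleton.mp h2'' ▸ h1)
                rw [hvv] at this
                simp at this
              have := hone' i hi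
              rwa [hV'e i hii] at this
            · rcases Finset.mem_image.mp h' with ⟨e, hef, rfl⟩
              rcases Finset.mem_filter.mp hef with ⟨heG, hc1⟩
              refine ⟨e, heG, ?_⟩
              intro i hi
              by_cases hii : i = i₀
              · rw [hii]
                exact hc1
              · have := hone' i hi
                rwa [hV'e i hii, hEc e heG i (Finset.mem_range.mp (hsub hi)) hii] at this
        have hG₁U : InU G₁ := ih t G₁ Hh V' hmeas hdisj' hbi' h2' hind' hHedge' hHU
        have hcardlt : (V i₀).card < G.verts.card := Finset.card_lt_card
          ((Finset.ssubset_iff_of_subset (hVsub i₀ hi₀t)).mpr ⟨wv, hwv, hwnv⟩)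
        exact inU_reduce (reducible_collapse G (V i₀) v hv (hVsub i₀ hi₀t) hi₀c hcardlt
          (fun e he => h2 e he i₀ hi₀t)) hG₁U (hind i₀ hi₀t)
    · refine main_base t G Hh V hdisj hbi ?_ hHedge hHU
      intro i hit
      by_contra hc
      exact hbig ⟨i, hit, by omega⟩

/-- If a 3-graph `G` can be decomposed into `(H; F₁, …, F_t)` where
`H, F₁, …, F_t` all belong to `𝒰`, then `G ∈ 𝒰`. -/
theorem stmt8 (G H : ThreeGraph) (t : ℕ) (F : ℕ → ThreeGraph)
    (hdec : Decomposable G H t F) (hH : InU H) (hF : ∀ i, i < t → InU (F i)) :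
    InU G := by
  obtain ⟨ht, V, hdisj, hbi, hV0, h2, hFi, hHv, hHe⟩ := hdec
  refine main (((Finset.range t).filter (fun i => 2 ≤ (V i).card)).card) t G H V le_rfl
    hdisj hbi h2 ?_ hHe hH
  intro i hi
  have heq : inducedG G (V i) = F i :=
    tg_ext ((hFi i hi).1).symm ((hFi i hi).2).symm
  rw [heq]
  exact hF i hi
end

section
/- Every forward-colorable 3-uniform hypergraph belongs to U_2. -/
/-- `G` is forward-colorable: there is a partition `V 0, …, V (t-1)` of `V(G)` such that
every edge has one vertex in some part `V i` and two vertices in a later part `V j`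
(`i < j`). -/
def ForwardColorable (G : ThreeGraph) : Prop :=
  ∃ (t : ℕ) (V : ℕ → Finset ℕ),
    (∀ i j, i < t → j < t → i ≠ j → Disjoint (V i) (V j)) ∧
    (Finset.range t).biUnion V = G.verts ∧
    ∀ e ∈ G.edges, ∃ i j, i < j ∧ j < t ∧ (e ∩ V i).card = 1 ∧ (e ∩ V j).card = 2

lemma edgeless_memU2 (G : ThreeGraph) (h : G.edges = ∅) : MemU 2 G := by
  refine MemU.mono 1 G (MemU.mono 0 G (MemU.zero G ?_))
  exact ⟨G.verts, ∅, ∅, by simp, by simp, by simp, by simp, by simp [h]⟩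

lemma stmt9_aux (n : ℕ) : ∀ (G : ThreeGraph), G.verts.card < n →
    ForwardColorable G → MemU 2 G := by
  induction n with
  | zero => intro G h; omega
  | succ n ih =>
    intro G hlt hG
    obtain ⟨t, V, hdisj, hcover, hedge⟩ := hG
    by_cases hE : G.edges = ∅
    · exact edgeless_memU2 G hE
    obtain ⟨e₀, he₀⟩ := Finset.nonempty_of_ne_empty hE
    obtain ⟨i₀, j₀, hij₀, hj₀t, hci₀, hcj₀⟩ := hedge e₀ he₀
    set S := (Finset.range t).filter (fun j => (V j).Nonempty) with hSdef
    have hVne : ∀ e ∈ G.edges, ∀ j, (e ∩ V j).card = 2 → (V j).Nonempty := by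
      intro e he j hcj
      have h2 : (e ∩ V j).Nonempty := Finset.card_pos.mp (by omega)
      exact h2.mono Finset.inter_subset_right
    have hSne : S.Nonempty := by
      refine ⟨j₀, ?_⟩
      simp only [hSdef, Finset.mem_filter, Finset.mem_range]
      exact ⟨hj₀t, hVne e₀ he₀ j₀ hcj₀⟩
    set m := S.max' hSne with hmdef
    have hmS : m ∈ S := S.max'_mem hSne
    have hmt : m < t := by
      have := hmS; simp only [hSdef, Finset.mem_filter, Finset.mem_range] at this
      exact this.1
    have hVm : (V m).Nonempty := by
      have := hmS; simp only [hSdef, Finset.mem_filter, Finset.mem_range] at this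
      exact this.2
    have hmax : ∀ j, j < t → (V j).Nonempty → j ≤ m := by
      intro j hj hVj
      exact S.le_max' j (by simp only [hSdef, Finset.mem_filter, Finset.mem_range]
                            exact ⟨hj, hVj⟩)
    set U := G.verts \ V m with hUdef
    -- key structural fact about edges
    have key : ∀ e ∈ G.edges, ((e ∩ U).card = 1 ∧ (e ∩ V m).card = 2) ∨
        ((e ∩ U).card = 3 ∧ ∃ i j, i < j ∧ j < m ∧
          (e ∩ V i).card = 1 ∧ (e ∩ V j).card = 2) := by
      intro e he
      obtain ⟨i, j, hij, hjt, hci, hcj⟩ := hedge e he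
      have hit : i < t := lt_trans hij hjt
      have hesub : e ⊆ G.verts := G.edge_sub e he
      have hecard : e.card = 3 := G.edge_card e he
      have heU : e ∩ U = e \ V m := by
        ext x
        simp only [hUdef, Finset.mem_inter, Finset.mem_sdiff]
        exact ⟨fun hx => ⟨hx.1, hx.2.2⟩, fun hx => ⟨hx.1, hesub hx.1, hx.2⟩⟩
      have hcardsum : (e \ V m).card + (e ∩ V m).card = e.card :=
        Finset.card_sdiff_add_card_inter e (V m)
      have hdij : Disjoint (V i) (V j) := hdisj i j hit hjt (Nat.ne_of_lt hij)
      have hsub : e ⊆ V i ∪ V j := by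
        have hdisj2 : Disjoint (e ∩ V i) (e ∩ V j) :=
          hdij.mono Finset.inter_subset_right Finset.inter_subset_right
        have h1 : (e ∩ (V i ∪ V j)).card = 3 := by
          rw [Finset.inter_union_distrib_left, Finset.card_union_of_disjoint hdisj2,
            hci, hcj]
        have h2 : e ∩ (V i ∪ V j) = e :=
          Finset.eq_of_subset_of_card_le Finset.inter_subset_left (by omega)
        exact Finset.inter_eq_left.mp h2
      have hjm : j ≤ m := hmax j hjt (hVne e he j hcj)
      by_cases hjem : j = m
      · left
        subst hjem
        constructor
        · rw [heU]; omega
        · exact hcj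
      · right
        have hjm' : j < m := lt_of_le_of_ne hjm hjem
        have him : i ≠ m := by omega
        have hem : e ∩ V m = ∅ := by
          apply Finset.eq_empty_of_forall_notMem
          intro x hx
          rw [Finset.mem_inter] at hx
          rcases Finset.mem_union.mp (hsub hx.1) with h | h
          · exact Finset.disjoint_left.mp (hdisj i m hit hmt him) h hx.2
          · exact Finset.disjoint_left.mp (hdisj j m hjt hmt hjem) h hx.2
        refine ⟨?_, i, j, hij, hjm', hci, hcj⟩
        have h0 : (e ∩ V m).card = 0 := by rw [hem]; simp
        rw [heU]
        omega
    have hUsub : U ⊆ G.verts := Finset.sdiff_subset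
    by_cases hU2 : 2 ≤ U.card
    · -- collapse U
      have hVmsub : V m ⊆ G.verts := by
        intro x hx
        rw [← hcover]
        exact Finset.mem_biUnion.mpr ⟨m, Finset.mem_range.mpr hmt, hx⟩
      have hUlt : U.card < G.verts.card :=
        Finset.card_lt_card (Finset.sdiff_ssubset hVmsub hVm)
      set v := G.verts.sup id + 1 with hvdef
      have hv : v ∉ G.verts := by
        intro h
        have := Finset.le_sup (f := id) h
        simp only [id] at this
        omega
      have hvne : ∀ e ∈ G.edges, v ∉ e := fun e he hve => hv (G.edge_sub e he hve)
      -- build H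
      have hHmem : ∀ e' ∈ G.edges.filter (fun e => e ∩ U = ∅) ∪
          (G.edges.filter (fun e => (e ∩ U).card = 1)).image (fun e => (e \ U) ∪ {v}),
          ∃ e ∈ G.edges, (e ∩ U).card = 1 ∧ e' = (e \ U) ∪ {v} := by
        intro e' he'
        rcases Finset.mem_union.mp he' with h | h
        · rw [Finset.mem_filter] at h
          rcases key e' h.1 with ⟨h1, _⟩ | ⟨h1, _⟩ <;> rw [h.2] at h1 <;> simp at h1
        · obtain ⟨e, he, heq⟩ := Finset.mem_image.mp h
          rw [Finset.mem_filter] at he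
          exact ⟨e, he.1, he.2, heq.symm⟩
      have hHcard : ∀ e ∈ G.edges, (e ∩ U).card = 1 → ((e \ U) ∪ {v}).card = 3 := by
        intro e he h1
        have hcardsum : (e \ U).card + (e ∩ U).card = e.card :=
          Finset.card_sdiff_add_card_inter e U
        have hecard : e.card = 3 := G.edge_card e he
        have hvnotin : v ∉ e \ U := fun h => hvne e he (Finset.mem_sdiff.mp h).1
        rw [Finset.card_union_of_disjoint (Finset.disjoint_singleton_right.mpr hvnotin)]
        simp only [Finset.card_singleton]
        omega
      set H : ThreeGraph :=
        { verts := (G.verts \ U) ∪ {v}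
          edges := G.edges.filter (fun e => e ∩ U = ∅) ∪
            (G.edges.filter (fun e => (e ∩ U).card = 1)).image (fun e => (e \ U) ∪ {v})
          edge_card := by
            intro e' he'
            obtain ⟨e, he, h1, heq⟩ := hHmem e' he'
            rw [heq]; exact hHcard e he h1
          edge_sub := by
            intro e' he'
            obtain ⟨e, he, h1, heq⟩ := hHmem e' he'
            rw [heq]
            apply Finset.union_subset_union _ (le_refl {v})
            exact Finset.sdiff_subset_sdiff (G.edge_sub e he) (le_refl U) } with hHdef
      set F : ThreeGraph :=
        { verts := U
          edges := G.edges.filter (fun e => e ⊆ U)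
          edge_card := by
            intro e he
            rw [Finset.mem_filter] at he
            exact G.edge_card e he.1
          edge_sub := by
            intro e he
            rw [Finset.mem_filter] at he
            exact he.2 } with hFdef
      have hred : Reducible G H F := by
        refine ⟨U, v, hUsub, hU2, hUlt, ?_, hv, rfl, rfl, rfl, rfl⟩
        intro e he
        rcases key e he with ⟨h1, _⟩ | ⟨h1, _⟩ <;> omega
      have hH1 : MemU 1 H := by
        apply MemU.one
        refine ⟨{v}, ?_, ?_⟩
        · intro x hx
          exact Finset.mem_union_right _ hx
        · intro e' he'
          obtain ⟨e, he, h1, heq⟩ := hHmem e' he'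
          have hvmem : v ∈ e' := by
            rw [heq]; exact Finset.mem_union_right _ (Finset.mem_singleton_self v)
          rw [Finset.inter_singleton_of_mem hvmem, Finset.card_singleton]
      have hF2 : MemU 2 F := by
        apply ih F
        · have hh : F.verts.card < G.verts.card := hUlt
          omega
        · refine ⟨m, V, ?_, ?_, ?_⟩
          · intro i j hi hj hij
            exact hdisj i j (lt_trans hi hmt) (lt_trans hj hmt) hij
          · ext x
            simp only [Finset.mem_biUnion, Finset.mem_range]
            constructor
            · rintro ⟨i, him, hxi⟩
              have hxverts : x ∈ G.verts := by
                rw [← hcover]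
                exact Finset.mem_biUnion.mpr ⟨i, Finset.mem_range.mpr (lt_trans him hmt), hxi⟩
              have hxm : x ∉ V m :=
                Finset.disjoint_left.mp
                  (hdisj i m (lt_trans him hmt) hmt (Nat.ne_of_lt him)) hxi
              show x ∈ U
              exact Finset.mem_sdiff.mpr ⟨hxverts, hxm⟩
            · intro hxU
              have hxU' : x ∈ G.verts \ V m := hxU
              rw [Finset.mem_sdiff] at hxU'
              rw [← hcover] at hxU'
              obtain ⟨i, hit, hxi⟩ := Finset.mem_biUnion.mp hxU'.1
              rw [Finset.mem_range] at hit
              have him : i ≤ m := hmax i hit ⟨x, hxi⟩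
              have : i ≠ m := fun h => hxU'.2 (h ▸ hxi)
              exact ⟨i, by omega, hxi⟩
          · intro e he
            have he' : e ∈ G.edges ∧ e ⊆ U := by
              have : e ∈ G.edges.filter (fun e => e ⊆ U) := he
              rwa [Finset.mem_filter] at this
            rcases key e he'.1 with ⟨h1, h2⟩ | ⟨h1, i, j, hij, hjm, hci, hcj⟩
            · exfalso
              have hsub : e ∩ V m ⊆ U ∩ V m := by
                exact Finset.inter_subset_inter he'.2 (le_refl (V m))
              have : U ∩ V m = ∅ := Finset.sdiff_inter_self _ _
              rw [this] at hsub
              have hcc := Finset.card_le_card hsub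
              simp only [Finset.card_empty] at hcc
              omega
            · exact ⟨i, j, hij, hjm, hci, hcj⟩
      exact MemU.reduce 0 G H F hred hH1 hF2
    · -- |U| ≤ 1 : G itself is in U₁
      apply MemU.mono
      apply MemU.one
      refine ⟨U, hUsub, ?_⟩
      intro e he
      have hle : (e ∩ U).card ≤ 1 :=
        le_trans (Finset.card_le_card Finset.inter_subset_right) (by omega)
      rcases key e he with ⟨h1, _⟩ | ⟨h1, _⟩ <;> omega

/-- Every forward-colorable 3-uniform hypergraph belongs to `𝒰₂`. -/
theorem stmt9 (G : ThreeGraph) (hG : ForwardColorable G) : MemU 2 G := by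
  exact stmt9_aux (G.verts.card + 1) G (by omega) hG
end

section
/- Let G be a 3-graph on n vertices with the property that for all sets A_1, A_2, A_3 ⊆ V(G), each of size at least n/100, there exist an edge e ∈ E(G) and three distinct vertices x, y, z with e = {x,y,z}, x ∈ A_1, y ∈ A_2 and z ∈ A_3. Then G ∉ U. -/
open Finset

/-!
Call `π` a small-fibre map from `G` to `K` with exceptional set `Z` if `Z` and all fibres of `π`
on `V(G) \ Z` have fewer than `t` vertices, and every edge of `G` with two vertices outside `Z`
either lies in one fibre or is mapped onto an edge of `K`. The identity is such a map from `G` to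
itself, and when `G` is `t`-spread with `|V(G)| ≥ 9t` no `K ∈ 𝒰` receives one, by induction along
the definition of `𝒰`. For `K ∈ 𝒰₁` (tripartite graphs included) with transversal `W`, either the
preimage of `W` is large, and splitting it in two gives an edge of `K` meeting `W` twice, or the
preimage of its complement is large, and splitting it in three gives an edge of `K` missing `W`.
If `K` collapses `U` to `(H, F)`, then either the preimage of `U` is small and composing `π` with
the collapse gives a small-fibre map to `H`, or its complement is small and becomes the exceptional
set of a small-fibre map to `F`; if both were large, spreadness would give an edge with two
vertices over `U` and one outside, which collapsibility of `U` forbids.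
-/

theorem Finset.exists_subset_le_card_filter_mem_lt_two_mul {α β : Type*} [DecidableEq α]
    [DecidableEq β] (s : Finset α) (f : α → β) {t : ℕ} (ht : 0 < t) {B : Finset β}
    (hsmall : ∀ b ∈ B, #(s.filter (f · = b)) < t) (hB : t ≤ #(s.filter (f · ∈ B))) :
    ∃ B' ⊆ B, t ≤ #(s.filter (f · ∈ B')) ∧ #(s.filter (f · ∈ B')) < 2 * t := by
  induction B using Finset.induction_on with
  | empty =>
    simp only [notMem_empty, filter_false, card_empty, nonpos_iff_eq_zero] at hB
    omega
  | insert b B hb ih =>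
    by_cases h : t ≤ #(s.filter (f · ∈ B))
    · obtain ⟨B', hB'B, hB'⟩ := ih (fun a ha => hsmall a (mem_insert_of_mem ha)) h
      exact ⟨B', hB'B.trans (subset_insert _ _), hB'⟩
    · refine ⟨insert b B, Subset.rfl, hB, ?_⟩
      have hsplit : s.filter (f · ∈ insert b B) = s.filter (f · = b) ∪ s.filter (f · ∈ B) := by
        simp only [mem_insert]
        exact filter_or _ _ _
      have hb := hsmall b (mem_insert_self b B)
      have := hsplit ▸ card_union_le (s.filter (f · = b)) (s.filter (f · ∈ B))
      omega

theorem Finset.card_filter_mem_sdiff_add {α β : Type*} [DecidableEq α] [DecidableEq β]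
    (s : Finset α) (f : α → β) {B' B : Finset β} (h : B' ⊆ B) :
    #(s.filter (f · ∈ B \ B')) + #(s.filter (f · ∈ B')) = #(s.filter (f · ∈ B)) := by
  have hdiff : s.filter (f · ∈ B \ B') = s.filter (f · ∈ B) \ s.filter (f · ∈ B') := by
    ext x
    simp only [mem_filter, mem_sdiff]
    tauto
  rw [hdiff, card_sdiff_add_card_eq_card (monotone_filter_right s fun _ _ hx => h hx)]

theorem Finset.mem_of_card_inter_ne_two {α : Type*} [DecidableEq α] {a b c : α} {U : Finset α}
    (hab : a ≠ b) (ha : a ∈ U) (hb : b ∈ U) (h : #({a, b, c} ∩ U) ≠ 2) : c ∈ U := by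
  by_contra hc
  have hinter : {a, b, c} ∩ U = {a, b} := by
    ext w
    simp only [mem_inter, mem_insert, mem_singleton]
    constructor
    · rintro ⟨rfl | rfl | rfl, hw⟩ <;> simp_all
    · rintro (rfl | rfl) <;> simp_all
  exact h (by rw [hinter, card_pair hab])

theorem ThreeGraph.ne_of_mem_edges (G : ThreeGraph) {x y z : ℕ} (h : {x, y, z} ∈ G.edges) :
    x ≠ y := by
  rintro rfl
  have h3 := G.edge_card _ h
  rw [insert_eq_of_mem (mem_insert_self x _)] at h3
  have := card_le_two (a := x) (b := z)
  omega

theorem ThreeGraph.card_inter_le_one {K : ThreeGraph} {e U : Finset ℕ} (he : e ∈ K.edges)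
    (h2 : #(e ∩ U) ≠ 2) (hsub : ¬ e ⊆ U) : #(e ∩ U) ≤ 1 := by
  have h3 : #(e ∩ U) ≤ 3 := K.edge_card e he ▸ card_le_card inter_subset_left
  have hne3 : #(e ∩ U) ≠ 3 := fun h3 =>
    hsub (inter_eq_left.1 (eq_of_subset_of_card_le inter_subset_left (K.edge_card e he ▸ h3.ge)))
  omega

theorem Tripartite.inU1 {K : ThreeGraph} (hK : Tripartite K) : InU1 K := by
  obtain ⟨V₁, _, _, -, -, -, hunion, hedges⟩ := hK
  exact ⟨V₁, hunion ▸ subset_union_left.trans subset_union_left, fun e he => (hedges e he).1⟩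

def collapseMap (U : Finset ℕ) (v a : ℕ) : ℕ := if a ∈ U then v else a

theorem collapseMap_eq_iff_mem {U : Finset ℕ} {v a : ℕ} (ha : a ≠ v) :
    collapseMap U v a = v ↔ a ∈ U := by
  unfold collapseMap; split_ifs <;> simp_all

theorem collapseMap_eq_iff_eq {U : Finset ℕ} {v a b : ℕ} (hb : b ∉ U) (hbv : b ≠ v) :
    collapseMap U v a = b ↔ a = b := by
  unfold collapseMap; split_ifs <;> grind

theorem mem_of_collapseMap_eq {U : Finset ℕ} {v a b : ℕ} (ha : a ≠ v) (hb : b ≠ v)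
    (hab : a ≠ b) (h : collapseMap U v a = collapseMap U v b) : a ∈ U ∧ b ∈ U := by
  unfold collapseMap at h; split_ifs at h <;> simp_all

theorem image_collapseMap_mem_edges {K H : ThreeGraph} {U : Finset ℕ} {v : ℕ}
    (hHe : H.edges = K.edges.filter (fun e => e ∩ U = ∅) ∪
      (K.edges.filter (fun e => (e ∩ U).card = 1)).image (fun e => (e \ U) ∪ {v}))
    {e : Finset ℕ} (he : e ∈ K.edges) (hU : #(e ∩ U) ≤ 1) :
    e.image (collapseMap U v) ∈ H.edges := by
  rw [hHe]
  rcases Nat.le_one_iff_eq_zero_or_eq_one.1 hU with h0 | h1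
  · rw [card_eq_zero] at h0
    have himage : e.image (collapseMap U v) = e := by
      refine (image_congr fun a ha => if_neg fun haU => ?_).trans image_id
      simpa [h0] using mem_inter.2 ⟨ha, haU⟩
    rw [himage]
    exact mem_union_left _ (mem_filter.2 ⟨he, h0⟩)
  · obtain ⟨u, hu⟩ := card_eq_one.1 h1
    have huU : u ∈ e ∩ U := hu ▸ mem_singleton_self u
    refine mem_union_right _ (mem_image.2 ⟨e, mem_filter.2 ⟨he, h1⟩, ?_⟩)
    ext w
    simp only [mem_image, mem_union, mem_sdiff, mem_singleton, collapseMap]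
    constructor
    · rintro (⟨hw, hwU⟩ | rfl)
      · exact ⟨w, hw, if_neg hwU⟩
      · exact ⟨u, (mem_inter.1 huU).1, if_pos (mem_inter.1 huU).2⟩
    · rintro ⟨a, ha, rfl⟩
      by_cases haU : a ∈ U
      · exact Or.inr (if_pos haU)
      · exact Or.inl (by simp [haU, ha])

def IsSpread (G : ThreeGraph) (t : ℕ) : Prop :=
  ∀ A₁ A₂ A₃ : Finset ℕ, A₁ ⊆ G.verts → A₂ ⊆ G.verts → A₃ ⊆ G.verts →
    t ≤ #A₁ → t ≤ #A₂ → t ≤ #A₃ → ∃ x ∈ A₁, ∃ y ∈ A₂, ∃ z ∈ A₃, {x, y, z} ∈ G.edges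

def ThreeGraph.pullback (G : ThreeGraph) (Z : Finset ℕ) (π : ℕ → ℕ) (B : Finset ℕ) :
    Finset ℕ :=
  (G.verts \ Z).filter (π · ∈ B)

namespace ThreeGraph

variable {G : ThreeGraph} {Z : Finset ℕ} {π : ℕ → ℕ} {B : Finset ℕ}

theorem mem_pullback {x : ℕ} : x ∈ G.pullback Z π B ↔ (x ∈ G.verts ∧ x ∉ Z) ∧ π x ∈ B := by
  simp only [pullback, mem_filter, mem_sdiff]

theorem pullback_subset : G.pullback Z π B ⊆ G.verts :=
  (filter_subset _ _).trans sdiff_subset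

end ThreeGraph

structure IsSmallFiberMap (G K : ThreeGraph) (t : ℕ) (π : ℕ → ℕ) (Z : Finset ℕ) : Prop where
  subset : Z ⊆ G.verts
  card_lt : #Z < t
  mapsTo : ∀ x ∈ G.verts \ Z, π x ∈ K.verts
  card_fiber_lt : ∀ a ∈ K.verts, #((G.verts \ Z).filter (π · = a)) < t
  edge_of_eq : ∀ x y z, {x, y, z} ∈ G.edges → x ∉ Z → y ∉ Z → π x = π y →
    z ∉ Z ∧ π z = π x
  edge_of_ne : ∀ x y z, {x, y, z} ∈ G.edges → x ∉ Z → y ∉ Z → π x ≠ π y →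
    z ∉ Z ∧ {π x, π y, π z} ∈ K.edges

namespace IsSmallFiberMap

open ThreeGraph

variable {G K : ThreeGraph} {t : ℕ} {π : ℕ → ℕ} {Z : Finset ℕ}

theorem id_self (G : ThreeGraph) (ht : 1 < t) : IsSmallFiberMap G G t id ∅ := by
  refine ⟨empty_subset _, by rw [card_empty]; omega, fun x hx => by simpa using hx,
    fun a _ => ?_, fun x y z he _ _ hxy => absurd hxy (G.ne_of_mem_edges he),
    fun x y z he _ _ _ => ⟨notMem_empty z, he⟩⟩
  calc #((G.verts \ ∅).filter (id · = a)) ≤ #({a} : Finset ℕ) :=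
        card_le_card fun x hx => by simpa using (mem_filter.1 hx).2
    _ < t := by simpa using ht

theorem exists_split (hπ : IsSmallFiberMap G K t π Z) {B : Finset ℕ} (hB : B ⊆ K.verts)
    (h : t ≤ #(G.pullback Z π B)) :
    ∃ B' ⊆ B, t ≤ #(G.pullback Z π B') ∧
      #(G.pullback Z π B) < #(G.pullback Z π (B \ B')) + 2 * t := by
  obtain ⟨B', hB'B, hlo, hhi⟩ := exists_subset_le_card_filter_mem_lt_two_mul (G.verts \ Z) π
    (Nat.zero_lt_of_lt hπ.card_lt) (fun a ha => hπ.card_fiber_lt a (hB ha)) h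
  have hsum := card_filter_mem_sdiff_add (G.verts \ Z) π hB'B
  exact ⟨B', hB'B, hlo, by unfold pullback; omega⟩

theorem exists_edge_of_disjoint (hπ : IsSmallFiberMap G K t π Z) (hs : IsSpread G t)
    {B₁ B₂ A : Finset ℕ} (hB : Disjoint B₁ B₂) (h₁ : t ≤ #(G.pullback Z π B₁))
    (h₂ : t ≤ #(G.pullback Z π B₂)) (hA : A ⊆ G.verts) (h₃ : t ≤ #A) :
    ∃ a ∈ B₁, ∃ b ∈ B₂, ∃ z ∈ A, z ∉ Z ∧ {a, b, π z} ∈ K.edges := by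
  obtain ⟨x, hx, y, hy, z, hz, he⟩ := hs _ _ _ pullback_subset pullback_subset hA h₁ h₂ h₃
  rw [mem_pullback] at hx hy
  have hxy : π x ≠ π y := fun h => disjoint_left.1 hB hx.2 (h ▸ hy.2)
  exact ⟨π x, hx.2, π y, hy.2, z, hz, hπ.edge_of_ne x y z he hx.1.2 hy.1.2 hxy⟩

theorem exists_edge_subset (hπ : IsSmallFiberMap G K t π Z) (hs : IsSpread G t)
    {B : Finset ℕ} (hB : B ⊆ K.verts) (h : 5 * t ≤ #(G.pullback Z π B)) :
    ∃ e ∈ K.edges, e ⊆ B := by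
  obtain ⟨B₁, hB₁, h₁, hrest₁⟩ := hπ.exists_split hB (by omega)
  obtain ⟨B₂, hB₂, h₂, hrest₂⟩ :=
    hπ.exists_split (sdiff_subset.trans hB) (B := B \ B₁) (by omega)
  obtain ⟨a, ha, b, hb, z, hz, -, he⟩ := hπ.exists_edge_of_disjoint hs
    (disjoint_of_subset_right hB₂ disjoint_sdiff) h₁ h₂ pullback_subset
    (A := G.pullback Z π ((B \ B₁) \ B₂)) (by omega)
  refine ⟨_, he, fun w hw => ?_⟩
  simp only [mem_insert, mem_singleton] at hw
  rcases hw with rfl | rfl | rfl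
  exacts [hB₁ ha, sdiff_subset (hB₂ hb), sdiff_subset (sdiff_subset (mem_pullback.1 hz).2)]

theorem not_inU1 (hπ : IsSmallFiberMap G K t π Z) (hs : IsSpread G t)
    (hn : 9 * t ≤ #G.verts) : ¬ InU1 K := by
  rintro ⟨W, hWK, hW⟩
  have hsplit := card_filter_mem_sdiff_add (G.verts \ Z) π hWK
  rw [filter_true_of_mem hπ.mapsTo, card_sdiff_of_subset hπ.subset] at hsplit
  change #(G.pullback Z π (K.verts \ W)) + #(G.pullback Z π W) = _ at hsplit
  have hZ := hπ.card_lt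
  have hZG := card_le_card hπ.subset
  by_cases hheavy : 3 * t ≤ #(G.pullback Z π W)
  · obtain ⟨B, hBW, hB, hrest⟩ := hπ.exists_split hWK (by omega)
    obtain ⟨a, ha, b, hb, z, -, -, he⟩ := hπ.exists_edge_of_disjoint hs disjoint_sdiff hB
      (B₂ := W \ B) (by omega) Subset.rfl (by omega)
    have hab : a ≠ b := fun h => (mem_sdiff.1 hb).2 (h ▸ ha)
    have hpair : #({a, b} : Finset ℕ) ≤ #({a, b, π z} ∩ W) := by
      refine card_le_card fun w hw => ?_
      simp only [mem_insert, mem_singleton] at hw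
      rcases hw with rfl | rfl
      · simp [hBW ha]
      · simp [(mem_sdiff.1 hb).1]
    rw [card_pair hab, hW _ he] at hpair
    omega
  · obtain ⟨e, he, heW⟩ := hπ.exists_edge_subset hs sdiff_subset (B := K.verts \ W)
      (by omega)
    have hempty : e ∩ W = ∅ := by
      ext w
      simp only [mem_inter, notMem_empty, iff_false, not_and]
      exact fun hw => (mem_sdiff.1 (heW hw)).2
    simpa [hempty] using hW e he

theorem collapse (hπ : IsSmallFiberMap G K t π Z) {H : ThreeGraph} {U : Finset ℕ} {v : ℕ}
    (hcoll : ∀ e ∈ K.edges, #(e ∩ U) ≠ 2) (hv : v ∉ K.verts)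
    (hHv : H.verts = (K.verts \ U) ∪ {v})
    (hHe : H.edges = K.edges.filter (fun e => e ∩ U = ∅) ∪
      (K.edges.filter (fun e => (e ∩ U).card = 1)).image (fun e => (e \ U) ∪ {v}))
    (hU : #(G.pullback Z π U) < t) :
    IsSmallFiberMap G H t (collapseMap U v ∘ π) Z := by
  have hne : ∀ x ∈ G.verts \ Z, π x ≠ v := fun x hx h => hv (h ▸ hπ.mapsTo x hx)
  refine ⟨hπ.subset, hπ.card_lt, fun x hx => ?_, fun a ha => ?_,
    fun x y z he hx hy hxy => ?_, fun x y z he hx hy hxy => ?_⟩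
  · have := hπ.mapsTo x hx
    simp only [hHv, Function.comp, collapseMap, mem_union, mem_sdiff, mem_singleton]
    split_ifs <;> simp_all
  · rw [hHv, mem_union, mem_singleton, mem_sdiff] at ha
    simp only [Function.comp_def]
    rcases ha with ⟨haK, haU⟩ | rfl
    · rw [filter_congr fun x _ => collapseMap_eq_iff_eq haU (ne_of_mem_of_not_mem haK hv)]
      exact hπ.card_fiber_lt a haK
    · rwa [filter_congr fun x hx => collapseMap_eq_iff_mem (hne x hx)]
  · have hxG : x ∈ G.verts \ Z := mem_sdiff.2 ⟨G.edge_sub _ he (by simp), hx⟩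
    have hyG : y ∈ G.verts \ Z := mem_sdiff.2 ⟨G.edge_sub _ he (by simp), hy⟩
    by_cases h : π x = π y
    · obtain ⟨hz, hzx⟩ := hπ.edge_of_eq x y z he hx hy h
      exact ⟨hz, by simp only [Function.comp, hzx]⟩
    · obtain ⟨hz, he'⟩ := hπ.edge_of_ne x y z he hx hy h
      obtain ⟨hxU, hyU⟩ := mem_of_collapseMap_eq (hne x hxG) (hne y hyG) h hxy
      have hzU := mem_of_card_inter_ne_two h hxU hyU (hcoll _ he')
      exact ⟨hz, by simp [collapseMap, hzU, hxU]⟩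
  · have h : π x ≠ π y := fun h => hxy (by simp only [Function.comp, h])
    obtain ⟨hz, he'⟩ := hπ.edge_of_ne x y z he hx hy h
    have hsub : ¬ {π x, π y, π z} ⊆ U := fun hsub =>
      hxy (by simp [collapseMap, hsub (by simp : π x ∈ _), hsub (by simp : π y ∈ _)])
    have hle := card_inter_le_one he' (hcoll _ he') hsub
    exact ⟨hz, by simpa [image_insert] using image_collapseMap_mem_edges hHe he' hle⟩

theorem mem_pullback_of_collapsible (hπ : IsSmallFiberMap G K t π Z) {U : Finset ℕ}
    (hcoll : ∀ e ∈ K.edges, #(e ∩ U) ≠ 2) {x y z : ℕ} (he : {x, y, z} ∈ G.edges)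
    (hx : x ∈ G.pullback Z π U) (hy : y ∈ G.pullback Z π U) : z ∈ G.pullback Z π U := by
  rw [mem_pullback] at hx hy ⊢
  have hzG : z ∈ G.verts := G.edge_sub _ he (by simp)
  by_cases h : π x = π y
  · obtain ⟨hz, hzx⟩ := hπ.edge_of_eq x y z he hx.1.2 hy.1.2 h
    exact ⟨⟨hzG, hz⟩, hzx ▸ hx.2⟩
  · obtain ⟨hz, he'⟩ := hπ.edge_of_ne x y z he hx.1.2 hy.1.2 h
    exact ⟨⟨hzG, hz⟩, mem_of_card_inter_ne_two h hx.2 hy.2 (hcoll _ he')⟩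

theorem restrict (hπ : IsSmallFiberMap G K t π Z) {F : ThreeGraph} {U : Finset ℕ}
    (hUK : U ⊆ K.verts) (hcoll : ∀ e ∈ K.edges, #(e ∩ U) ≠ 2) (hFv : F.verts = U)
    (hFe : F.edges = K.edges.filter (fun e => e ⊆ U))
    (hU : #(G.verts \ G.pullback Z π U) < t) :
    IsSmallFiberMap G F t π (G.verts \ G.pullback Z π U) := by
  have hcore : G.verts \ (G.verts \ G.pullback Z π U) = G.pullback Z π U :=
    Finset.sdiff_sdiff_eq_self pullback_subset
  refine ⟨sdiff_subset, hU, fun x hx => ?_, fun a ha => ?_, fun x y z he hx hy hxy => ?_,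
    fun x y z he hx hy hxy => ?_⟩
  · rw [hcore] at hx
    exact hFv ▸ (mem_pullback.1 hx).2
  · rw [hcore]
    exact (card_le_card (filter_subset_filter _ (filter_subset _ _))).trans_lt
      (hπ.card_fiber_lt a (hUK (hFv ▸ ha)))
  all_goals
    have hP : ∀ w ∈ ({x, y, z} : Finset ℕ), w ∉ G.verts \ G.pullback Z π U →
        w ∈ G.pullback Z π U :=
      fun w hw hw' => by simpa [G.edge_sub _ he hw] using hw'
    have hx' := hP x (by simp) hx
    have hy' := hP y (by simp) hy
    have hz' := hπ.mem_pullback_of_collapsible hcoll he hx' hy'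
    have hzZ : z ∉ G.verts \ G.pullback Z π U := fun h => (mem_sdiff.1 h).2 hz'
    rw [mem_pullback] at hx' hy' hz'
  · exact ⟨hzZ, (hπ.edge_of_eq x y z he hx'.1.2 hy'.1.2 hxy).2⟩
  · refine ⟨hzZ, hFe ▸ mem_filter.2 ⟨(hπ.edge_of_ne x y z he hx'.1.2 hy'.1.2 hxy).2, ?_⟩⟩
    intro w hw
    simp only [mem_insert, mem_singleton] at hw
    rcases hw with rfl | rfl | rfl
    exacts [hx'.2, hy'.2, hz'.2]

theorem card_sdiff_pullback_lt (hπ : IsSmallFiberMap G K t π Z) (hs : IsSpread G t)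
    {U : Finset ℕ} (hcoll : ∀ e ∈ K.edges, #(e ∩ U) ≠ 2) (hU : t ≤ #(G.pullback Z π U)) :
    #(G.verts \ G.pullback Z π U) < t := by
  by_contra! h
  obtain ⟨x, hx, y, hy, z, hz, he⟩ :=
    hs _ _ _ pullback_subset pullback_subset sdiff_subset hU hU h
  exact (mem_sdiff.1 hz).2 (hπ.mem_pullback_of_collapsible hcoll he hx hy)

end IsSmallFiberMap

theorem not_isSmallFiberMap_of_memU {G : ThreeGraph} {t : ℕ} (hs : IsSpread G t)
    (hn : 9 * t ≤ #G.verts) {i : ℕ} {K : ThreeGraph} (hK : MemU i K) {π : ℕ → ℕ}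
    {Z : Finset ℕ} : ¬ IsSmallFiberMap G K t π Z := by
  induction hK generalizing π Z with
  | zero K hK => exact fun hπ => hπ.not_inU1 hs hn hK.inU1
  | one K hK => exact fun hπ => hπ.not_inU1 hs hn hK
  | mono _ _ _ ih => exact ih
  | reduce _ K H F hred _ _ ihH ihF =>
    intro hπ
    obtain ⟨U, v, hUK, -, -, hcoll, hv, hHv, hHe, hFv, hFe⟩ := hred
    by_cases hU : #(G.pullback Z π U) < t
    · exact ihH (hπ.collapse hcoll hv hHv hHe hU)
    · exact ihF (hπ.restrict hUK hcoll hFv hFe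
        (hπ.card_sdiff_pullback_lt hs hcoll (not_lt.1 hU)))

/-- Let `G` be a 3-graph on `n` vertices such that for all
`A₁, A₂, A₃ ⊆ V(G)`, each of size at least `n/100`, there is an edge `e = {x, y, z}` with
`x ∈ A₁`, `y ∈ A₂`, `z ∈ A₃` (and `x, y, z` distinct). Then `G ∉ 𝒰`. -/
theorem stmt12 (G : ThreeGraph)
    (hspread : ∀ A1 A2 A3 : Finset ℕ, A1 ⊆ G.verts → A2 ⊆ G.verts → A3 ⊆ G.verts →
      (G.verts.card : ℝ) / 100 ≤ (A1.card : ℝ) →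
      (G.verts.card : ℝ) / 100 ≤ (A2.card : ℝ) →
      (G.verts.card : ℝ) / 100 ≤ (A3.card : ℝ) →
      ∃ e ∈ G.edges, ∃ x ∈ A1, ∃ y ∈ A2, ∃ z ∈ A3,
        x ≠ y ∧ x ≠ z ∧ y ≠ z ∧ e = {x, y, z}) :
    ¬ InU G := by
  rintro ⟨i, hi⟩
  have hreal : ∀ k : ℕ, #G.verts ≤ 100 * k → (#G.verts : ℝ) / 100 ≤ k := fun k hk => by
    rw [div_le_iff₀ (by norm_num)]
    exact_mod_cast (by omega : #G.verts ≤ k * 100)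
  obtain hsmall | hlarge := le_or_gt #G.verts 100
  · obtain ⟨A, hAG, hA⟩ := exists_subset_card_eq (min_le_left #G.verts 1)
    have hA' := hreal #A (by omega)
    obtain ⟨-, -, x, hx, y, hy, -, -, hxy, -⟩ := hspread A A A hAG hAG hAG hA' hA' hA'
    exact hxy (card_le_one.1 (hA ▸ min_le_right _ _) x hx y hy)
  · have hs : IsSpread G (#G.verts / 100 + 1) := fun A₁ A₂ A₃ h₁ h₂ h₃ c₁ c₂ c₃ => by
      obtain ⟨e, he, x, hx, y, hy, z, hz, -, -, -, rfl⟩ := hspread A₁ A₂ A₃ h₁ h₂ h₃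
        (hreal _ (by omega)) (hreal _ (by omega)) (hreal _ (by omega))
      exact ⟨x, hx, y, hy, z, hz, he⟩
    exact not_isSmallFiberMap_of_memU hs (by omega) hi (IsSmallFiberMap.id_self G (by omega))
end

section
/- The complete 3-uniform hypergraph K_4^{(3)} on 4 vertices is not in U. -/
/-- The complete 3-graph `K₄⁽³⁾` on 4 vertices. -/
def K4graph : ThreeGraph where
  verts := {0, 1, 2, 3}
  edges := {{0, 1, 2}, {0, 1, 3}, {0, 2, 3}, {1, 2, 3}}
  edge_card := by decide
  edge_sub := by decide

lemma K4_not_tri : ¬ Tripartite K4graph := by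
  rintro ⟨V1, V2, V3, h12, h13, h23, hun, he⟩
  have hsub : ∀ V : Finset ℕ, V ⊆ V1 ∪ V2 ∪ V3 → V ∈ ({0,1,2,3} : Finset ℕ).powerset := by
    intro V hV
    rw [Finset.mem_powerset]
    intro x hx
    have := hV hx
    rw [hun] at this
    exact this
  have key : ∀ A ∈ ({0,1,2,3} : Finset ℕ).powerset,
      ∀ B ∈ ({0,1,2,3} : Finset ℕ).powerset,
      ∀ C ∈ ({0,1,2,3} : Finset ℕ).powerset,
      A ∪ B ∪ C = ({0,1,2,3} : Finset ℕ) →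
      ¬ (∀ e ∈ K4graph.edges, (e ∩ A).card = 1 ∧ (e ∩ B).card = 1 ∧ (e ∩ C).card = 1) := by
    decide
  exact key V1 (hsub V1 (by intro x hx; simp [Finset.mem_union, hx]))
    V2 (hsub V2 (by intro x hx; simp [Finset.mem_union, hx]))
    V3 (hsub V3 (by intro x hx; simp [Finset.mem_union, hx])) hun he

lemma K4_not_U1 : ¬ InU1 K4graph := by
  rintro ⟨W, hW, he⟩
  have key : ∀ A ∈ ({0,1,2,3} : Finset ℕ).powerset,
      ¬ (∀ e ∈ K4graph.edges, (e ∩ A).card = 1) := by decide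
  exact key W (Finset.mem_powerset.mpr hW) he

lemma K4_not_red : ∀ H F, ¬ Reducible K4graph H F := by
  rintro H F ⟨U, v, hU, h2, h4, hno, -⟩
  have key : ∀ A ∈ ({0,1,2,3} : Finset ℕ).powerset,
      2 ≤ A.card → A.card < 4 → ¬ (∀ e ∈ K4graph.edges, (e ∩ A).card ≠ 2) := by decide
  exact key U (Finset.mem_powerset.mpr hU) h2 h4 hno

lemma K4_not_memU : ∀ i G, MemU i G → G ≠ K4graph := by
  intro i G h
  induction h with
  | zero G htri => rintro rfl; exact K4_not_tri htri
  | one G hu1 => rintro rfl; exact K4_not_U1 hu1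
  | mono i G _ ih => exact ih
  | reduce i G H F hred _ _ _ _ => rintro rfl; exact K4_not_red H F hred

/-- The complete 3-uniform hypergraph `K₄⁽³⁾` on 4 vertices is not in `𝒰`. -/
theorem stmt15 : ¬ InU K4graph := by
  rintro ⟨i, h⟩
  exact K4_not_memU i K4graph h rfl
end

section
/- For every m ≥ 2, the 3-graph with vertex set F_2^m ∖ {0} whose edges are the triples {x, y, z} of distinct nonzero vectors with x + y + z = 0 is forward-colorable (certified by the partition into the sets V_i of vectors whose last nonzero coordinate is the i-th, for i = 1, …, m). -/
open Finset

/-- For every `m ≥ 2`, the 3-graph with vertex set `𝔽₂ᵐ ∖ {0}` whose edges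
are the triples `{x, y, z}` of distinct nonzero vectors with `x + y + z = 0` is
forward-colorable: there is a partition `V 0, …, V (t-1)` of the vertex set such that
every edge has exactly one vertex in some part `V i` and exactly two vertices in a later
part `V j` (with `i < j`). -/
theorem stmt17 (m : ℕ) (hm : 2 ≤ m) :
    ∃ (t : ℕ) (V : ℕ → Finset (Fin m → ZMod 2)),
      (∀ i j, i < t → j < t → i ≠ j → Disjoint (V i) (V j)) ∧
      (Finset.range t).biUnion V =
        Finset.univ.filter (fun x : Fin m → ZMod 2 => x ≠ 0) ∧
      ∀ e : Finset (Fin m → ZMod 2), e.card = 3 → (∀ x ∈ e, x ≠ 0) →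
        (∑ x ∈ e, x) = 0 →
        ∃ i j, i < j ∧ j < t ∧ (e ∩ V i).card = 1 ∧ (e ∩ V j).card = 2 := by
  classical
  set L : (Fin m → ZMod 2) → ℕ :=
    fun x => (univ.filter (fun k => x k ≠ 0)).sup (fun k => (k : ℕ)) with hLdef
  have hle : ∀ (x : Fin m → ZMod 2) (k : Fin m), x k ≠ 0 → (k : ℕ) ≤ L x := by
    intro x k hk
    exact Finset.le_sup (f := fun k : Fin m => (k : ℕ)) (mem_filter.2 ⟨mem_univ _, hk⟩)
  have hattain : ∀ x : Fin m → ZMod 2, x ≠ 0 → ∃ k : Fin m, x k ≠ 0 ∧ (k : ℕ) = L x := by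
    intro x hx
    obtain ⟨k, hk⟩ := Function.ne_iff.1 hx
    have hne : (univ.filter (fun k => x k ≠ 0)).Nonempty :=
      ⟨k, mem_filter.2 ⟨mem_univ _, hk⟩⟩
    obtain ⟨k', hk', hk'e⟩ := Finset.exists_mem_eq_sup _ hne (fun k : Fin m => (k : ℕ))
    exact ⟨k', (mem_filter.1 hk').2, hk'e.symm⟩
  refine ⟨m, fun i => univ.filter (fun x => x ≠ 0 ∧ L x = i), ?_, ?_, ?_⟩
  · intro i j _ _ hij
    rw [Finset.disjoint_left]
    intro x hx hy
    exact hij ((mem_filter.1 hx).2.2 ▸ (mem_filter.1 hy).2.2)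
  · ext x
    simp only [mem_biUnion, mem_range, mem_filter, mem_univ, true_and]
    constructor
    · rintro ⟨i, -, hx, -⟩; exact hx
    · intro hx
      obtain ⟨k, hk, hke⟩ := hattain x hx
      exact ⟨L x, hke ▸ k.isLt, hx, rfl⟩
  · intro e hcard hnz hsum
    have hene : e.Nonempty := by rw [← Finset.card_pos, hcard]; norm_num
    obtain ⟨y, hy, hysup⟩ := Finset.exists_mem_eq_sup e hene L
    obtain ⟨jf, hjf, hjfe⟩ := hattain y (hnz y hy)
    -- jf : Fin m, (jf : ℕ) = L y = e.sup L
    set j : ℕ := L y with hj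
    have hjm : j < m := hjfe ▸ jf.isLt
    have hLsup : ∀ x ∈ e, L x ≤ j := fun x hx => hysup ▸ Finset.le_sup hx
    -- characterize: for x ∈ e, x jf ≠ 0 ↔ L x = j
    have hchar : ∀ x ∈ e, (x jf ≠ 0 ↔ L x = j) := by
      intro x hx
      constructor
      · intro h
        exact le_antisymm (hLsup x hx) (hjfe ▸ hle x jf h)
      · intro h
        obtain ⟨k, hk, hke⟩ := hattain x (hnz x hx)
        have : k = jf := Fin.ext (by omega)
        exact this ▸ hk
    set S : Finset (Fin m → ZMod 2) := e.filter (fun x => x jf ≠ 0) with hS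
    have hsum2 : (S.card : ZMod 2) = 0 := by
      have h0 : (∑ x ∈ e, x) jf = 0 := by rw [hsum]; rfl
      rw [Finset.sum_apply] at h0
      rw [← Finset.sum_filter_ne_zero] at h0
      have hone : ∀ x ∈ S, x jf = 1 := by
        intro x hx
        have := (mem_filter.1 hx).2
        revert this
        generalize x jf = a
        revert a; decide
      rw [Finset.sum_congr rfl hone, Finset.sum_const, nsmul_eq_mul, mul_one] at h0
      exact h0
    have hdvd : 2 ∣ S.card := (ZMod.natCast_eq_zero_iff _ 2).1 hsum2
    have hSle : S.card ≤ 3 := hcard ▸ Finset.card_filter_le e _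
    have hSpos : 0 < S.card := Finset.card_pos.2 ⟨y, mem_filter.2 ⟨hy, hjf⟩⟩
    have hS2 : S.card = 2 := by omega
    -- the complement
    have hT : (e \ S).card = 1 := by
      rw [Finset.card_sdiff_of_subset (Finset.filter_subset _ _), hcard, hS2]
    obtain ⟨w, hw⟩ := Finset.card_eq_one.1 hT
    have hwT : w ∈ e \ S := hw ▸ Finset.mem_singleton_self w
    have hwe : w ∈ e := (Finset.mem_sdiff.1 hwT).1
    have hwjf : ¬ (w jf ≠ 0) := fun h =>
      (Finset.mem_sdiff.1 hwT).2 (mem_filter.2 ⟨hwe, h⟩)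
    have hwlt : L w < j := lt_of_le_of_ne (hLsup w hwe)
      (fun h => hwjf ((hchar w hwe).2 h))
    refine ⟨L w, j, hwlt, hjm, ?_, ?_⟩
    · have : e ∩ univ.filter (fun x => x ≠ 0 ∧ L x = L w) = {w} := by
        ext x
        simp only [Finset.mem_inter, mem_filter, mem_univ, true_and, Finset.mem_singleton]
        constructor
        · rintro ⟨hxe, -, hLx⟩
          by_contra hxw
          have hxS : x ∈ S := by
            by_contra hxS
            have : x ∈ e \ S := Finset.mem_sdiff.2 ⟨hxe, hxS⟩
            rw [hw, Finset.mem_singleton] at this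
            exact hxw this
          have := (hchar x hxe).1 (mem_filter.1 hxS).2
          omega
        · intro h; rw [h]
          exact ⟨hwe, hnz w hwe, rfl⟩
      rw [this, Finset.card_singleton]
    · have : e ∩ univ.filter (fun x => x ≠ 0 ∧ L x = j) = S := by
        ext x
        simp only [Finset.mem_inter, mem_filter, mem_univ, true_and, hS]
        constructor
        · rintro ⟨hxe, -, hLx⟩
          exact ⟨hxe, (hchar x hxe).2 hLx⟩
        · rintro ⟨hxe, hxjf⟩
          exact ⟨hxe, hnz x hxe, (hchar x hxe).1 hxjf⟩
      rw [this, hS2]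
end
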